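/- arXiv:2005.10521 — 8 statements merged into one kernel-verified Lean document; each statement's English description precedes it below -/
import Mathlib

section
/- Let α = 1/2 and p₀ < 0. For every h < 0 such that the level set {½v² + V(u) = h} is a nontrivial closed orbit in the period annulus (i.e., 0 > h > V((-p₀)^{-2})), the period T_p(h) = √2 ∫_{u⁻(h)}^{u⁺(h)} du/√(h - V(u)) equals the constant 2√2·π·(-p₀)^{-3/2}, where u⁻(h) < u⁺(h) are the two positive roots of V(u) = h. -/
open Real Set intervalIntegral

/-!
Write `a = -p₀` and `s = √u`. Then `h - V u = h + 2 s - a s²`, which factors as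
`a (s - s₁) (s₂ - s)` with `s₁ = √u⁻ < s₂ = √u⁺`, and Vieta gives `s₁ + s₂ = 2 / a`. Since `du = 2 s ds`, the
period integral is `a^(-1/2)` times the arcsine integral `∫ 2 s ds / √((s - s₁) (s₂ - s)) = π (s₁ + s₂)`,
which depends on the roots only through their sum, hence not on `h`.
-/

noncomputable def arcsinAntideriv (s₁ s₂ s : ℝ) : ℝ :=
  (s₁ + s₂) / 2 * arcsin ((2 * s - s₁ - s₂) / (s₂ - s₁)) - √((s - s₁) * (s₂ - s))

theorem hasDerivAt_arcsinAntideriv {s₁ s₂ s : ℝ} (hs₁ : s₁ < s) (hs₂ : s < s₂) :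
    HasDerivAt (arcsinAntideriv s₁ s₂) (s / √((s - s₁) * (s₂ - s))) s := by
  have hd : 0 < s₂ - s₁ := by linarith
  have hQ : 0 < (s - s₁) * (s₂ - s) := mul_pos (by linarith) (by linarith)
  have hx : HasDerivAt (fun s => (2 * s - s₁ - s₂) / (s₂ - s₁)) (2 / (s₂ - s₁)) s := by
    simpa using (((hasDerivAt_id' s).const_mul 2).sub_const s₁ |>.sub_const s₂).div_const (s₂ - s₁)
  have hlo : -1 < (2 * s - s₁ - s₂) / (s₂ - s₁) := by rw [lt_div_iff₀ hd]; linarith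
  have hhi : (2 * s - s₁ - s₂) / (s₂ - s₁) < 1 := by rw [div_lt_one hd]; linarith
  have hQd : HasDerivAt (fun s => (s - s₁) * (s₂ - s)) (s₂ + s₁ - 2 * s) s := by
    refine (((hasDerivAt_id' s).sub_const s₁).mul ((hasDerivAt_id' s).const_sub s₂)).congr_deriv ?_
    ring
  have h := (((hasDerivAt_arcsin hlo.ne' hhi.ne).comp s hx).const_mul ((s₁ + s₂) / 2)).sub
    (hQd.sqrt hQ.ne')
  refine h.congr_deriv ?_
  have h1 : 1 - ((2 * s - s₁ - s₂) / (s₂ - s₁)) ^ 2 = 4 * ((s - s₁) * (s₂ - s)) / (s₂ - s₁) ^ 2 := by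
    field_simp; ring
  rw [h1, sqrt_div' _ (sq_nonneg _), sqrt_sq hd.le, sqrt_mul' _ hQ.le,
    show √4 = 2 by rw [show (4 : ℝ) = 2 ^ 2 by norm_num, sqrt_sq zero_le_two]]
  have : 0 < √((s - s₁) * (s₂ - s)) := sqrt_pos.mpr hQ
  field_simp
  ring

theorem continuous_arcsinAntideriv (s₁ s₂ : ℝ) : Continuous (arcsinAntideriv s₁ s₂) := by
  unfold arcsinAntideriv
  fun_prop

theorem arcsinAntideriv_left {s₁ s₂ : ℝ} (hs : s₁ ≠ s₂) :
    arcsinAntideriv s₁ s₂ s₁ = -((s₁ + s₂) / 2 * (π / 2)) := by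
  have : (2 * s₁ - s₁ - s₂) / (s₂ - s₁) = -1 := by
    rw [div_eq_iff (sub_ne_zero.mpr hs.symm)]; ring
  simp [arcsinAntideriv, this]

theorem arcsinAntideriv_right {s₁ s₂ : ℝ} (hs : s₁ ≠ s₂) :
    arcsinAntideriv s₁ s₂ s₂ = (s₁ + s₂) / 2 * (π / 2) := by
  have : (2 * s₂ - s₁ - s₂) / (s₂ - s₁) = 1 := by
    rw [div_eq_iff (sub_ne_zero.mpr hs.symm)]; ring
  simp [arcsinAntideriv, this]

theorem integral_inv_sqrt_mul_sqrt_sub {s₁ s₂ : ℝ} (hs₁ : 0 ≤ s₁) (hs : s₁ < s₂) :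
    ∫ u in s₁ ^ 2..s₂ ^ 2, 1 / √((√u - s₁) * (s₂ - √u)) = π * (s₁ + s₂) := by
  set F : ℝ → ℝ := fun u => 2 * arcsinAntideriv s₁ s₂ √u
  have hsq : s₁ ^ 2 < s₂ ^ 2 := by gcongr
  have hF : ∀ u ∈ Ioo (s₁ ^ 2) (s₂ ^ 2), HasDerivAt F (1 / √((√u - s₁) * (s₂ - √u))) u := by
    rintro u ⟨hu₁, hu₂⟩
    have hu : 0 < u := (sq_nonneg s₁).trans_lt hu₁
    have hlo : s₁ < √u := lt_sqrt hs₁ |>.mpr hu₁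
    have hhi : √u < s₂ := (sqrt_lt' (hs₁.trans_lt hs)).mpr hu₂
    refine (((hasDerivAt_arcsinAntideriv hlo hhi).comp u (hasDerivAt_sqrt hu.ne')).const_mul 2
      ).congr_deriv ?_
    have : 0 < √u := sqrt_pos.mpr hu
    field_simp
  have hFc : ContinuousOn F (uIcc (s₁ ^ 2) (s₂ ^ 2)) :=
    (continuous_const.mul ((continuous_arcsinAntideriv s₁ s₂).comp continuous_sqrt)).continuousOn
  have hint := intervalIntegrable_deriv_of_nonneg hFc
    (by rwa [min_eq_left hsq.le, max_eq_right hsq.le]) (fun u _ => by positivity)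
  rw [integral_eq_sub_of_hasDerivAt_of_le hsq.le (by rwa [uIcc_of_le hsq.le] at hFc) hF hint]
  simp only [F, sqrt_sq hs₁, sqrt_sq (hs₁.trans hs.le), arcsinAntideriv_left hs.ne,
    arcsinAntideriv_right hs.ne]
  ring

theorem mul_add_eq_two_of_roots {a h s₁ s₂ : ℝ} (hs : s₁ ≠ s₂)
    (h₁ : a * s₁ ^ 2 - 2 * s₁ = h) (h₂ : a * s₂ ^ 2 - 2 * s₂ = h) : a * (s₁ + s₂) = 2 := by
  have : (s₁ - s₂) * (a * (s₁ + s₂) - 2) = 0 := by linear_combination h₁ - h₂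
  linarith [(mul_eq_zero.mp this).resolve_left (sub_ne_zero.mpr hs)]

theorem sub_eq_mul_of_roots {a h s₁ s₂ : ℝ} (hs : s₁ ≠ s₂)
    (h₁ : a * s₁ ^ 2 - 2 * s₁ = h) (h₂ : a * s₂ ^ 2 - 2 * s₂ = h) (s : ℝ) :
    h - (a * s ^ 2 - 2 * s) = a * ((s - s₁) * (s₂ - s)) := by
  linear_combination -h₁ + (s₁ - s) * mul_add_eq_two_of_roots hs h₁ h₂

theorem rpow_neg_three_halves {a : ℝ} (ha : 0 ≤ a) : a ^ (-(3 / 2) : ℝ) = (a * √a)⁻¹ := by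
  rw [rpow_neg ha, show (3 / 2 : ℝ) = 1 + 1 / 2 by norm_num, rpow_add' ha (by norm_num),
    rpow_one, ← sqrt_eq_rpow]

theorem stmt5_general (p₀ h um up : ℝ) (hp : p₀ < 0)
    (V : ℝ → ℝ) (hV : ∀ u : ℝ, V u = -p₀ * u - 2 * Real.sqrt u)
    (hum : 0 < um) (hlt : um < up)
    (hroot1 : V um = h) (hroot2 : V up = h) :
    Real.sqrt 2 * ∫ u in um..up, 1 / Real.sqrt (h - V u)
      = 2 * Real.sqrt 2 * π * (-p₀) ^ (-(3/2) : ℝ) := by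
  have ha : 0 < -p₀ := neg_pos.mpr hp
  have hV' : ∀ u, 0 ≤ u → V u = -p₀ * √u ^ 2 - 2 * √u := fun u hu => by rw [hV, sq_sqrt hu]
  have h₁ : -p₀ * √um ^ 2 - 2 * √um = h := by rw [← hV' um hum.le, hroot1]
  have h₂ : -p₀ * √up ^ 2 - 2 * √up = h := by rw [← hV' up (hum.trans hlt).le, hroot2]
  have hs : √um < √up := sqrt_lt_sqrt hum.le hlt
  have hperiod : ∫ u in um..up, 1 / √(h - V u) = (√(-p₀))⁻¹ * (π * (√um + √up)) := by
    rw [← integral_inv_sqrt_mul_sqrt_sub (sqrt_nonneg um) hs, sq_sqrt hum.le,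
      sq_sqrt (hum.trans hlt).le, ← integral_const_mul]
    refine integral_congr fun u hu => ?_
    have hu : 0 ≤ u := hum.le.trans (by simpa [hlt.le] using hu.1)
    rw [hV' u hu, sub_eq_mul_of_roots hs.ne h₁ h₂, sqrt_mul ha.le, one_div, one_div, mul_inv]
  have hsum : √um + √up = 2 / -p₀ := by
    rw [eq_div_iff ha.ne', mul_comm, mul_add_eq_two_of_roots hs.ne h₁ h₂]
  rw [hperiod, hsum, rpow_neg_three_halves ha.le]
  have : 0 < √(-p₀) := sqrt_pos.mpr ha
  field_simp

theorem stmt5 (p₀ h um up : ℝ) (hp : p₀ < 0)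
    (V : ℝ → ℝ) (hV : ∀ u : ℝ, V u = -p₀ * u - 2 * Real.sqrt u)
    (hcenter : 1 / p₀ < h) (hneg : h < 0)
    (hum : 0 < um) (hlt : um < up)
    (hroot1 : V um = h) (hroot2 : V up = h) :
    Real.sqrt 2 * ∫ u in um..up, 1 / Real.sqrt (h - V u)
      = 2 * Real.sqrt 2 * π * (-p₀) ^ (-(3/2) : ℝ) :=
  stmt5_general p₀ h um up hp V hV hum hlt hroot1 hroot2
end

section
/- Let α = 1/2 and p₀ < 0. For h > 0 the bouncing-time function T_b(h) = √2 ∫_0^{u⁺(h)} du/√(h - V(u)), where u⁺(h) is the unique positive root of V(u) = h with V'(u⁺(h)) > 0, is given explicitly by T_b(h) = (2√2/(-p₀)^{3/2})·(π/2 + arctan((-p₀h)^{-1/2})) - 2√(2h)/p₀. -/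
/-!
In the variable `t = √u` the energy gap becomes a difference of squares,
`q (h - V u) = (1 + q h) - (q t - 1)²` with `q = -p₀`, so `1 / √(h - V u)` has the elementary
antiderivative `-(2/q) √(h - V u) + (2 / (q √q)) arcsin ((q √u - 1) / √(1 + q h))`.
At the turning point `q √u⁺ - 1 = √(1 + q h)`, so the arcsine is `π/2` there, and at `u = 0` it is
`-arcsin (1 / √(1 + q h)) = -arctan (1 / √(q h))`.
-/

open Real Set intervalIntegral MeasureTheory

namespace BouncingTime

/-- The potential `V` with `q = -p₀`. -/
noncomputable def potential (q u : ℝ) : ℝ := q * u - 2 * √u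

variable {q h u : ℝ}

lemma continuous_potential : Continuous (potential q) := by
  unfold potential; fun_prop

lemma hasDerivAt_potential (hu : 0 < u) : HasDerivAt (potential q) (q - 1 / √u) u := by
  have hs : √u ≠ 0 := (sqrt_pos.2 hu).ne'
  refine (((hasDerivAt_id u).const_mul q).sub ((hasDerivAt_sqrt hu.ne').const_mul 2)).congr_deriv ?_
  field_simp

lemma mul_sub_potential (hu : 0 ≤ u) :
    q * (h - potential q u) = (1 + q * h) - (q * √u - 1) ^ 2 := by
  have := sq_sqrt hu
  unfold potential
  linear_combination q ^ 2 * this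

lemma pos_of_potential_eq {up : ℝ} (hq : 0 < q) (hh : 0 < h) (hup : potential q up = h) :
    0 < up := by
  by_contra! hle
  rw [potential, sqrt_eq_zero'.2 hle] at hup
  nlinarith

lemma mul_sqrt_sub_one_eq_of_potential_eq {up : ℝ} (hq : 0 < q) (hh : 0 < h)
    (hup : potential q up = h) : q * √up - 1 = √(1 + q * h) := by
  have hup_pos := pos_of_potential_eq hq hh hup
  have hsq := mul_sub_potential (q := q) (h := h) hup_pos.le
  rw [hup, sub_self, mul_zero] at hsq
  -- `h = √u⁺ (q √u⁺ - 2) > 0` selects the root of `(q √u⁺ - 1)² = 1 + q h` with the `+` sign.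
  have : 2 < q * √up := by
    rw [potential] at hup
    nlinarith [sq_sqrt hup_pos.le, sqrt_nonneg up]
  rw [← sqrt_sq (by linarith : 0 ≤ q * √up - 1)]
  congr 1
  linarith

lemma sub_potential_pos {up : ℝ} (hq : 0 < q) (hh : 0 < h) (hup : potential q up = h)
    (hu : u ∈ Ioo 0 up) : 0 < h - potential q u := by
  have hturn := mul_sqrt_sub_one_eq_of_potential_eq hq hh hup
  have hc : 1 < √(1 + q * h) := by
    rw [lt_sqrt zero_le_one]; nlinarith [mul_pos hq hh]
  have ht : 0 < √u := sqrt_pos.2 hu.1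
  have hts : √u < √up := sqrt_lt_sqrt hu.1.le hu.2
  have hlo : -√(1 + q * h) < q * √u - 1 := by nlinarith [mul_pos hq ht]
  have hhi : q * √u - 1 < √(1 + q * h) := by nlinarith [mul_pos hq (sub_pos.2 hts)]
  have hsq : (q * √u - 1) ^ 2 < 1 + q * h := by
    rw [← sq_sqrt (by nlinarith [mul_pos hq hh] : 0 ≤ 1 + q * h)]
    exact sq_lt_sq' hlo hhi
  have := mul_sub_potential (q := q) (h := h) hu.1.le
  exact pos_of_mul_pos_right (by linarith) hq.le

noncomputable def antideriv (q h u : ℝ) : ℝ :=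
  -(2 / q) * √(h - potential q u) + 2 / (q * √q) * arcsin ((q * √u - 1) / √(1 + q * h))

lemma continuous_antideriv : Continuous (antideriv q h) := by
  unfold antideriv
  have := continuous_potential (q := q)
  fun_prop

lemma hasDerivAt_antideriv (hq : 0 < q) (hu : 0 < u) (hgap : 0 < h - potential q u) :
    HasDerivAt (antideriv q h) (1 / √(h - potential q u)) u := by
  have hkey := mul_sub_potential (q := q) (h := h) hu.le
  have hqh : 0 < 1 + q * h := by nlinarith [sq_nonneg (q * √u - 1)]
  set c := √(1 + q * h)
  set x := (q * √u - 1) / c with hx_def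
  have hc : 0 < c := sqrt_pos.2 hqh
  have hc2 : c ^ 2 = 1 + q * h := sq_sqrt hqh.le
  have hx : 1 - x ^ 2 = q * (h - potential q u) / c ^ 2 := by
    rw [hkey, ← hc2, hx_def]; field_simp
  have hx1 : x ^ 2 < 1 := by
    have : 0 < q * (h - potential q u) / c ^ 2 := by positivity
    linarith
  have hsqrt_x : √(1 - x ^ 2) = √q * √(h - potential q u) / c := by
    rw [hx, sqrt_div (by positivity), sqrt_mul hq.le, sqrt_sq hc.le]
  have hgap_sqrt := (((hasDerivAt_potential hu).const_sub h).sqrt hgap.ne').const_mul (-(2 / q))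
  have harg : HasDerivAt (fun u => (q * √u - 1) / c) (q * (1 / (2 * √u)) / c) u :=
    (((hasDerivAt_sqrt hu.ne').const_mul q).sub_const 1).div_const c
  have harcsin := ((hasDerivAt_arcsin (by nlinarith) (by nlinarith)).comp u harg).const_mul
    (2 / (q * √q))
  refine (hgap_sqrt.add harcsin).congr_deriv ?_
  have : 0 < √u := sqrt_pos.2 hu
  have : 0 < √q := sqrt_pos.2 hq
  have : 0 < √(h - potential q u) := sqrt_pos.2 hgap
  rw [hsqrt_x]
  field_simp
  rw [sq_sqrt hq.le]
  ring

lemma arcsin_one_div_sqrt_one_add {y : ℝ} (hy : 0 < y) :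
    arcsin (1 / √(1 + y)) = arctan (1 / √y) := by
  have hs : 0 < √y := sqrt_pos.2 hy
  rw [arctan_eq_arcsin]
  congr 1
  rw [div_pow, sq_sqrt hy.le, one_pow, div_div, ← sqrt_mul hy.le, mul_add, mul_one,
    mul_one_div_cancel hy.ne', add_comm]

theorem integral_one_div_sqrt_sub_potential {up : ℝ} (hq : 0 < q) (hh : 0 < h)
    (hup : potential q up = h) :
    ∫ u in (0 : ℝ)..up, 1 / √(h - potential q u)
      = 2 / (q * √q) * (π / 2 + arctan (1 / √(q * h))) + 2 * √h / q := by
  have hup_pos := pos_of_potential_eq hq hh hup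
  have hturn := mul_sqrt_sub_one_eq_of_potential_eq hq hh hup
  have hderiv (u : ℝ) (hu : u ∈ Ioo 0 up) :=
    hasDerivAt_antideriv (h := h) hq hu.1 (sub_potential_pos hq hh hup hu)
  have hint : IntervalIntegrable (fun u => 1 / √(h - potential q u)) volume 0 up :=
    (intervalIntegrable_iff_integrableOn_Ioc_of_le hup_pos.le).2 <|
      integrableOn_deriv_of_nonneg continuous_antideriv.continuousOn hderiv
        fun _ _ => by positivity
  rw [integral_eq_sub_of_hasDerivAt_of_le hup_pos.le continuous_antideriv.continuousOn hderiv
    hint]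
  have hc : 0 < √(1 + q * h) := sqrt_pos.2 (by nlinarith [mul_pos hq hh])
  have hV0 : potential q 0 = 0 := by simp [potential]
  simp only [antideriv, hup, hV0, hturn, sub_self, sqrt_zero, div_self hc.ne', arcsin_one,
    sub_zero, mul_zero, zero_sub, neg_div, arcsin_neg, ← arcsin_one_div_sqrt_one_add
    (mul_pos hq hh)]
  field_simp
  ring

end BouncingTime

open BouncingTime in
theorem stmt6_general (p₀ h up : ℝ) (hp : p₀ < 0) (hh : 0 < h)
    (V : ℝ → ℝ) (hV : ∀ u : ℝ, V u = -p₀ * u - 2 * Real.sqrt u)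
    (hroot : V up = h) :
    Real.sqrt 2 * ∫ u in (0:ℝ)..up, 1 / Real.sqrt (h - V u)
      = 2 * Real.sqrt 2 / (-p₀) ^ ((3:ℝ)/2) * (π / 2 + arctan ((-p₀ * h) ^ (-(1/2) : ℝ)))
        - 2 * Real.sqrt (2 * h) / p₀ := by
  have hVq : V = potential (-p₀) := funext hV
  subst hVq
  have hq : 0 < -p₀ := neg_pos.2 hp
  rw [integral_one_div_sqrt_sub_potential hq hh hroot,
    show (3 : ℝ) / 2 = 1 + 1 / 2 by norm_num, rpow_add hq, rpow_one, ← sqrt_eq_rpow,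
    rpow_neg (mul_pos hq hh).le, ← sqrt_eq_rpow, ← one_div, sqrt_mul zero_le_two]
  field_simp
  ring

theorem stmt6 (p₀ h up : ℝ) (hp : p₀ < 0) (hh : 0 < h)
    (V : ℝ → ℝ) (hV : ∀ u : ℝ, V u = -p₀ * u - 2 * Real.sqrt u)
    (hup : 0 < up) (hroot : V up = h) (hslope : 0 < deriv V up)
    (huniq : ∀ u : ℝ, 0 < u → V u = h → 0 < deriv V u → u = up) :
    Real.sqrt 2 * ∫ u in (0:ℝ)..up, 1 / Real.sqrt (h - V u)
      = 2 * Real.sqrt 2 / (-p₀) ^ ((3:ℝ)/2) * (π / 2 + arctan ((-p₀ * h) ^ (-(1/2) : ℝ)))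
        - 2 * Real.sqrt (2 * h) / p₀ :=
  stmt6_general p₀ h up hp hh V hV hroot
end

section
/- With α = 1/2 and p₀ < 0, the function T_b(h) = (2√2/(-p₀)^{3/2})·(π/2 + arctan((-p₀h)^{-1/2})) - 2√(2h)/p₀ defined for h > 0 satisfies: (i) lim_{h→0⁺} T_b(h) = 2√2·π·(-p₀)^{-3/2}; (ii) T_b is strictly increasing on (0,∞); (iii) T_b(h) → +∞ as h → +∞. -/
open Real Filter Set Topology

/-! With `a = -p₀` and `s = √(a h)`, the identity `arctan s⁻¹ = π / 2 - arctan s` and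
`2 √(2h) / a = c s` for `c = 2 √2 a^(-3/2)` give the closed form `T_b(h) = c (π + (s - arctan s))`.
The function `s ↦ s - arctan s` has derivative `s² / (1 + s²)`, so it increases strictly from `0`
at `s = 0` and tends to `+∞`; all three claims follow. -/

theorem strictMonoOn_sub_arctan : StrictMonoOn (fun s : ℝ => s - arctan s) (Ici 0) := by
  refine strictMonoOn_of_deriv_pos (convex_Ici 0) (by fun_prop) fun s hs => ?_
  have hs : 0 < s := by rwa [interior_Ici] at hs
  have hderiv : HasDerivAt (fun s : ℝ => s - arctan s) (1 - 1 / (1 + s ^ 2)) s :=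
    (hasDerivAt_id s).sub (hasDerivAt_arctan s)
  rw [hderiv.deriv, sub_pos, div_lt_one (by positivity)]
  nlinarith [mul_pos hs hs]

theorem tendsto_sub_arctan_atTop : Tendsto (fun s : ℝ => s - arctan s) atTop atTop :=
  tendsto_atTop_mono (fun s => by dsimp only [id]; linarith [arctan_lt_pi_div_two s])
    (tendsto_atTop_add_const_right _ (-(π / 2)) tendsto_id)

theorem rpow_three_halves_eq {a : ℝ} (ha : 0 ≤ a) : a ^ ((3:ℝ)/2) = a * √a := by
  rw [show ((3:ℝ)/2) = 1 + 1/2 by norm_num, rpow_add' ha (by norm_num), rpow_one, sqrt_eq_rpow]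

theorem bounceTime_eq {p₀ h : ℝ} (hp : p₀ < 0) (hh : 0 < h) :
    2 * √2 / (-p₀) ^ ((3:ℝ)/2) * (π / 2 + arctan ((-p₀ * h) ^ (-(1/2) : ℝ))) - 2 * √(2 * h) / p₀
      = 2 * √2 * (-p₀) ^ (-(3/2) : ℝ) * (π + (√(-p₀ * h) - arctan √(-p₀ * h))) := by
  have ha : 0 < -p₀ := neg_pos.mpr hp
  have hah : 0 < -p₀ * h := mul_pos ha hh
  rw [rpow_neg (by positivity), ← sqrt_eq_rpow, arctan_inv_of_pos (sqrt_pos.mpr hah),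
    rpow_neg ha.le, show (3/2 : ℝ) = (3:ℝ)/2 by norm_num, rpow_three_halves_eq ha.le,
    sqrt_mul ha.le, sqrt_mul zero_le_two]
  have hp' : p₀ = -(√(-p₀) * √(-p₀)) := by rw [mul_self_sqrt ha.le]; ring
  rw [div_eq_mul_inv _ p₀, hp']
  field_simp
  ring

theorem stmt7 (p₀ : ℝ) (hp : p₀ < 0) (Tb : ℝ → ℝ)
    (hTb : ∀ h : ℝ, 0 < h → Tb h =
      2 * Real.sqrt 2 / (-p₀) ^ ((3:ℝ)/2) * (π / 2 + arctan ((-p₀ * h) ^ (-(1/2) : ℝ)))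
        - 2 * Real.sqrt (2 * h) / p₀) :
    Tendsto Tb (𝓝[>] 0) (𝓝 (2 * Real.sqrt 2 * π * (-p₀) ^ (-(3/2) : ℝ))) ∧
    StrictMonoOn Tb (Set.Ioi 0) ∧
    Tendsto Tb atTop atTop := by
  set c := 2 * √2 * (-p₀) ^ (-(3/2) : ℝ)
  have hc : 0 < c := by have := neg_pos.mpr hp; positivity
  set s : ℝ → ℝ := fun h => √(-p₀ * h)
  have hTb_eq : EqOn Tb (fun h => c * (π + (s h - arctan (s h)))) (Ioi 0) := fun h hh =>
    (hTb h hh).trans (bounceTime_eq hp hh)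
  have hs_mono : StrictMonoOn s (Ioi 0) := fun x hx y _ hxy =>
    sqrt_lt_sqrt (mul_pos (neg_pos.mpr hp) hx).le (by nlinarith)
  refine ⟨?_, ?_, ?_⟩
  · have hcont : Continuous fun h => c * (π + (s h - arctan (s h))) := by fun_prop
    have hlim := (hcont.tendsto 0).mono_left (nhdsWithin_le_nhds : 𝓝[>] (0:ℝ) ≤ 𝓝 0)
    rw [show c * (π + (s 0 - arctan (s 0))) = 2 * √2 * π * (-p₀) ^ (-(3/2) : ℝ) by
      simp only [s, c, mul_zero, sqrt_zero, arctan_zero, sub_self, add_zero]; ring] at hlim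
    exact hlim.congr' (eventuallyEq_nhdsWithin_of_eqOn hTb_eq.symm)
  · refine StrictMonoOn.congr ?_ hTb_eq.symm
    intro x hx y hy hxy
    have := strictMonoOn_sub_arctan (sqrt_nonneg _) (sqrt_nonneg _) (hs_mono hx hy hxy)
    dsimp only
    gcongr
  · refine Tendsto.congr' (eventuallyEq_of_mem (Ioi_mem_atTop 0) hTb_eq).symm ?_
    have hs_top : Tendsto s atTop atTop :=
      tendsto_sqrt_atTop.comp (tendsto_id.const_mul_atTop (neg_pos.mpr hp))
    exact Tendsto.const_mul_atTop hc
      (tendsto_atTop_add_const_left _ π (tendsto_sub_arctan_atTop.comp hs_top))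
end

section
/- Let V ∈ C²((α₀,∞)) with V(u) → h* and V'(u) → -∞ as u → α₀⁺, V(0) = V'(0) = 0, V''(0) > 0 and uV'(u) > 0 for u ≠ 0. If u(t) is a solution of ü + V'(u) = 0 with energy h = ½u̇(0)² + V(u(0)) ≥ h* and u̇(0) = 0, then there exists t₀ > 0 such that u(t) → α₀ as t → t₀⁻ and as t → -t₀⁺, the one-sided limits u̇(t₀⁻) and u̇(-t₀⁺) exist and are finite, and u̇(t₀⁻) = -u̇(-t₀⁺). -/
/-!
Write the equation as the planar system `(u, u')' = (u', -V'(u))` on `{u > α₀}`. The energy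
`u'² / 2 + V(u)` is conserved and `V ≥ 0`, so `u'` is bounded and `u` has a limit at the finite
endpoint `b`. Were this limit above `α₀`, `V'(u)` would stay bounded, `(u, u')` would converge to
a point of the phase space and the solution could be continued past `b`. Hence `u → α₀`,
`V(u) → h*` and `u'²` converges, so `u'` converges, as it cannot change sign near `b` without
vanishing there. Finally the system is reversible: `t ↦ (u(-t), -u'(-t))` is again a solution,
with the same value at `0` because `u'(0) = 0`. By uniqueness `u` is even and `u'` is odd, and
maximality forces `a = -b`.
-/

open Real Filter Set Topology

theorem exists_tendsto_nhdsLT_of_hasDerivAt_of_norm_le {E : Type*} [NormedAddCommGroup E]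
    [NormedSpace ℝ E] [CompleteSpace E] {f f' : ℝ → E} {b C : ℝ}
    (hf : ∀ᶠ t in 𝓝[<] b, HasDerivAt f (f' t) t ∧ ‖f' t‖ ≤ C) :
    ∃ L, Tendsto f (𝓝[<] b) (𝓝 L) := by
  obtain ⟨a, hab, hsub⟩ := mem_nhdsLT_iff_exists_Ioo_subset.1 hf
  have hlip : LipschitzOnWith C.toNNReal f (Ioo a b) :=
    (convex_Ioo a b).lipschitzOnWith_of_nnnorm_hasDerivWithin_le
      (fun t ht => (hsub ht).1.hasDerivWithinAt)
      (fun t ht => by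
        rw [← NNReal.coe_le_coe, coe_nnnorm]
        exact (hsub ht).2.trans (Real.le_coe_toNNReal C))
  exact cauchy_map_iff_exists_tendsto.1 <|
    (cauchy_nhds.mono nhdsWithin_le_nhds).map_of_le hlip.uniformContinuousOn
      (le_principal_iff.2 (Ioo_mem_nhdsLT hab))

theorem exists_tendsto_nhdsLT_of_tendsto_sq {f : ℝ → ℝ} {b c : ℝ}
    (hf : ∀ᶠ t in 𝓝[<] b, ContinuousAt f t)
    (hsq : Tendsto (fun t => f t ^ 2) (𝓝[<] b) (𝓝 c)) :
    ∃ v, Tendsto f (𝓝[<] b) (𝓝 v) := by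
  have habs : Tendsto (fun t => |f t|) (𝓝[<] b) (𝓝 √c) := by
    simpa only [Real.sqrt_sq_eq_abs] using hsq.sqrt
  rcases le_or_gt c 0 with hc | hc
  · rw [Real.sqrt_eq_zero'.2 hc] at habs
    exact ⟨0, (tendsto_zero_iff_abs_tendsto_zero f).2 habs⟩
  -- once `f ≠ 0`, connectedness forces `f = |f|` or `f = -|f|`
  obtain ⟨a, hab, hsub⟩ := mem_nhdsLT_iff_exists_Ioo_subset.1
    (hf.and (hsq.eventually (eventually_gt_nhds hc)))
  have hcont : ContinuousOn f (Ioo a b) := fun t ht => (hsub ht).1.continuousWithinAt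
  have hIoo : Ioo a b ∈ 𝓝[<] b := Ioo_mem_nhdsLT hab
  rcases isPreconnected_Ioo.eq_or_eq_neg_of_sq_eq hcont hcont.abs
      (fun t _ => by simp [sq_abs]) (fun ht => by simpa using (hsub ht).2.ne') with h | h
  · exact ⟨√c, habs.congr' (mem_of_superset hIoo fun t ht => (h ht).symm)⟩
  · exact ⟨-√c, habs.neg.congr' (mem_of_superset hIoo fun t ht => (h ht).symm)⟩

section AutonomousODE

variable {E : Type*} [NormedAddCommGroup E] [NormedSpace ℝ E]
  {F : E → E} {Ω : Set E} {γ η : ℝ → E} {s s' : Set ℝ} {a b : ℝ}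

def IsSolutionOn (F : E → E) (Ω : Set E) (γ : ℝ → E) (s : Set ℝ) : Prop :=
  ∀ t ∈ s, HasDerivAt γ (F (γ t)) t ∧ γ t ∈ Ω

def IsMaximalSolutionOn (F : E → E) (Ω : Set E) (γ : ℝ → E) (a b : ℝ) : Prop :=
  IsSolutionOn F Ω γ (Ioo a b) ∧ ∀ c d η, c ≤ a → b ≤ d →
    IsSolutionOn F Ω η (Ioo c d) → EqOn η γ (Ioo a b) → c = a ∧ d = b

theorem IsSolutionOn.congr (hs : IsOpen s) (hγ : IsSolutionOn F Ω γ s) (h : EqOn η γ s) :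
    IsSolutionOn F Ω η s := fun t ht => by
  rw [h ht]
  exact ⟨(hγ t ht).1.congr_of_eventuallyEq (mem_of_superset (hs.mem_nhds ht) h),
    (hγ t ht).2⟩

theorem IsSolutionOn.mono (hγ : IsSolutionOn F Ω γ s) (h : s' ⊆ s) : IsSolutionOn F Ω γ s' :=
  fun t ht => hγ t (h ht)

theorem IsSolutionOn.union (h : IsSolutionOn F Ω γ s) (h' : IsSolutionOn F Ω γ s') :
    IsSolutionOn F Ω γ (s ∪ s') := fun t ht => ht.elim (h t) (h' t)

theorem IsSolutionOn.piecewise [∀ t, Decidable (t ∈ s)] (hs : IsOpen s) (hs' : IsOpen s')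
    (hγ : IsSolutionOn F Ω γ s) (hη : IsSolutionOn F Ω η s') (h : EqOn γ η (s ∩ s')) :
    IsSolutionOn F Ω (s.piecewise γ η) (s ∪ s') := by
  refine (hγ.congr hs fun t ht => piecewise_eq_of_mem _ _ _ ht).union
    (hη.congr hs' fun t ht => ?_)
  by_cases hts : t ∈ s
  · rw [piecewise_eq_of_mem _ _ _ hts, h ⟨hts, ht⟩]
  · exact piecewise_eq_of_notMem _ _ _ hts

theorem IsSolutionOn.comp_neg (R : E →L[ℝ] E) (hR : ∀ p, F (R p) = -R (F p))
    (hΩ : MapsTo R Ω Ω) (hγ : IsSolutionOn F Ω γ s) :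
    IsSolutionOn F Ω (fun t => R (γ (-t))) (-s) := fun t ht => by
  refine ⟨?_, hΩ (hγ (-t) ht).2⟩
  have := R.hasFDerivAt.comp_hasDerivAt t ((hγ (-t) ht).1.scomp t (hasDerivAt_neg t))
  simpa [Function.comp_def, hR] using this

theorem IsSolutionOn.eqOn (hF : ∀ p ∈ Ω, ContDiffAt ℝ 1 F p) (hs : IsOpen s)
    (hs' : IsPreconnected s) (hγ : IsSolutionOn F Ω γ s) (hη : IsSolutionOn F Ω η s)
    {t₀ : ℝ} (ht₀ : t₀ ∈ s) (h : γ t₀ = η t₀) : EqOn γ η s := by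
  -- the set where `γ = η` is open by local uniqueness and closed by continuity
  refine fun t ht => (hs'.induction₂' (fun x y => (γ x = η x ↔ γ y = η y))
    (fun x hx => ?_) (fun _ _ _ _ _ _ => Iff.trans) ht₀ ht).1 h
  rw [hs.nhdsWithin_eq hx]
  have hγx := (hγ x hx).1.continuousAt
  by_cases hxe : γ x = η x
  · obtain ⟨K, U, hU, hlip⟩ := (hF _ (hγ x hx).2).exists_lipschitzOnWith
    have hU' : U ∈ 𝓝 (η x) := hxe ▸ hU
    have hloc : γ =ᶠ[𝓝 x] η :=
      ODE_solution_unique_of_eventually (v := fun _ => F) (s := fun _ => U)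
        (Eventually.of_forall fun _ => hlip)
        ((hs.eventually_mem hx).and (hγx hU) |>.mono fun y hy => ⟨(hγ y hy.1).1, hy.2⟩)
        ((hs.eventually_mem hx).and ((hη x hx).1.continuousAt hU') |>.mono
          fun y hy => ⟨(hη y hy.1).1, hy.2⟩) hxe
    filter_upwards [hloc] with y hy
    simp [hxe, hy]
  · filter_upwards [(hγx.sub (hη x hx).1.continuousAt).eventually_ne (sub_ne_zero.2 hxe)]
      with y hy
    simp [hxe, sub_ne_zero.1 hy]

theorem IsSolutionOn.exists_extension [CompleteSpace E] {p : E} (hF : ContDiffAt ℝ 1 F p)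
    (hΩ : Ω ∈ 𝓝 p) (hγ : IsSolutionOn F Ω γ (Ioo a b)) (hab : a < b)
    (hlim : Tendsto γ (𝓝[<] b) (𝓝 p)) :
    ∃ d > b, ∃ η, IsSolutionOn F Ω η (Ioo a d) ∧ EqOn η γ (Ioo a b) := by
  obtain ⟨δ, hδb, ε, hε, hδ⟩ :=
    hF.exists_forall_mem_closedBall_exists_eq_forall_mem_Ioo_hasDerivAt₀ b
  have hnear : ∀ᶠ t in 𝓝 b, t ∈ Ioo (b - ε) (b + ε) := Ioo_mem_nhds (by linarith) (by linarith)
  obtain ⟨d, hbd, hsub⟩ := mem_nhdsGE_iff_exists_Ico_subset.1 <| nhdsWithin_le_nhds <|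
    hnear.and ((hδ b (mem_of_mem_nhds hnear)).continuousAt (hδb ▸ hΩ))
  have hδsol : IsSolutionOn F Ω δ (Ioo b d) := fun t ht =>
    ⟨hδ t (hsub (Ioo_subset_Ico_self ht)).1, (hsub (Ioo_subset_Ico_self ht)).2⟩
  set η : ℝ → E := fun t => if t < b then γ t else δ t with hη
  have hηγ : EqOn η γ (Ioo a b) := fun t ht => if_pos ht.2
  have hηsol : IsSolutionOn F Ω η (Ioo a b) := hγ.congr isOpen_Ioo hηγ
  have hηb : η b = p := by simp [hη, hδb]
  refine ⟨d, hbd, η, fun t ht => ?_, hηγ⟩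
  rcases lt_trichotomy t b with htb | rfl | htb
  · exact hηsol t ⟨ht.1, htb⟩
  · rw [hηb]
    refine ⟨?_, mem_of_mem_nhds hΩ⟩
    -- glue the one-sided derivatives: from the left `η' = F ∘ γ → F p`, from the right `η = δ`
    have hleft : HasDerivWithinAt η (F p) (Iic t) t := by
      refine hasDerivWithinAt_Iic_of_tendsto_deriv
        (fun s hs => (hηsol s hs).1.differentiableAt.differentiableWithinAt) ?_
        (Ioo_mem_nhdsLT hab) ?_
      · rw [ContinuousWithinAt, hηb]
        exact (hlim.mono_left (nhdsWithin_mono _ Ioo_subset_Iio_self)).congr'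
          (eventually_nhdsWithin_of_forall fun s hs => (hηγ hs).symm)
      · refine (hF.continuousAt.tendsto.comp hlim).congr' ?_
        filter_upwards [Ioo_mem_nhdsLT hab] with s hs
        rw [(hηsol s hs).1.deriv, Function.comp_apply, hηγ hs]
    have hright : HasDerivWithinAt η (F p) (Ici t) t :=
      hδb ▸ (hδ t (mem_of_mem_nhds hnear)).hasDerivWithinAt.congr
        (fun s hs => if_neg (not_lt.2 hs)) (if_neg (lt_irrefl t))
    simpa [Iic_union_Ici] using hleft.union hright
  · exact (hδsol.congr isOpen_Ioo fun s hs => if_neg (not_lt.2 hs.1.le)) t ⟨htb, ht.2⟩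

theorem IsMaximalSolutionOn.eq_neg_and_eqOn_comp_neg (hF : ∀ p ∈ Ω, ContDiffAt ℝ 1 F p)
    (R : E →L[ℝ] E) (hR : ∀ p, F (R p) = -R (F p)) (hΩ : MapsTo R Ω Ω)
    (hγ : IsMaximalSolutionOn F Ω γ a b) (h0 : (0 : ℝ) ∈ Ioo a b) (hR0 : R (γ 0) = γ 0) :
    a = -b ∧ EqOn (fun t => R (γ (-t))) γ (Ioo a b) := by
  classical
  have hγR : IsSolutionOn F Ω (fun t => R (γ (-t))) (Ioo (-b) (-a)) := by
    simpa only [neg_Ioo] using hγ.1.comp_neg R hR hΩ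
  have hJ : EqOn γ (fun t => R (γ (-t))) (Ioo a b ∩ Ioo (-b) (-a)) :=
    (hγ.1.mono inter_subset_left).eqOn hF (isOpen_Ioo.inter isOpen_Ioo)
      (by rw [Ioo_inter_Ioo]; exact isPreconnected_Ioo) (hγR.mono inter_subset_right)
      ⟨h0, by simpa [and_comm] using h0⟩ (by simp [hR0])
  have hglued := hγ.1.piecewise isOpen_Ioo isOpen_Ioo hγR hJ
  rw [Ioo_union_Ioo' (by linarith [h0.1, h0.2]) (by linarith [h0.1, h0.2])] at hglued
  obtain ⟨hmin, hmax⟩ := hγ.2 _ _ _ (min_le_left _ _) (le_max_left _ _) hglued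
    fun t ht => piecewise_eq_of_mem _ _ _ ht
  have hab : a = -b := by linarith [min_eq_left_iff.1 hmin, max_eq_left_iff.1 hmax]
  refine ⟨hab, fun t ht => (hJ ⟨ht, ?_⟩).symm⟩
  rwa [hab, neg_neg, ← hab]

end AutonomousODE

section Newton

variable {V : ℝ → ℝ} {α₀ : ℝ} {γ : ℝ → ℝ × ℝ} {s : Set ℝ} {a b : ℝ}

theorem nonneg_of_forall_mul_deriv_pos (hα₀ : α₀ < 0) (hV : DifferentiableOn ℝ V (Ioi α₀))
    (hV0 : V 0 = 0) (hsign : ∀ u ∈ Ioi α₀, u ≠ 0 → 0 < u * deriv V u) {x : ℝ} (hx : α₀ < x) :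
    0 ≤ V x := by
  rcases le_total x 0 with hx0 | hx0
  · have hsub : Icc x 0 ⊆ Ioi α₀ := fun y hy => hx.trans_le hy.1
    have hanti : AntitoneOn V (Icc x 0) :=
      antitoneOn_of_deriv_nonpos (convex_Icc x 0) (hV.continuousOn.mono hsub)
        (hV.mono (interior_subset.trans hsub)) fun y hy => by
          rw [interior_Icc] at hy
          nlinarith [hsign y (hx.trans hy.1) hy.2.ne, hy.2]
    simpa [hV0] using hanti ⟨le_rfl, hx0⟩ ⟨hx0, le_rfl⟩ hx0
  · have hsub : Icc 0 x ⊆ Ioi α₀ := fun y hy => hα₀.trans_le hy.1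
    have hmono : MonotoneOn V (Icc 0 x) :=
      monotoneOn_of_deriv_nonneg (convex_Icc 0 x) (hV.continuousOn.mono hsub)
        (hV.mono (interior_subset.trans hsub)) fun y hy => by
          rw [interior_Icc] at hy
          nlinarith [hsign y (hα₀.trans hy.1) hy.1.ne', hy.1]
    simpa [hV0] using hmono ⟨le_rfl, hx0⟩ ⟨hx0, le_rfl⟩ hx0

noncomputable def newtonField (V : ℝ → ℝ) (p : ℝ × ℝ) : ℝ × ℝ := (p.2, -deriv V p.1)

noncomputable def energy (V : ℝ → ℝ) (p : ℝ × ℝ) : ℝ := p.2 ^ 2 / 2 + V p.1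

def velocityReflection : ℝ × ℝ →L[ℝ] ℝ × ℝ :=
  (ContinuousLinearMap.fst ℝ ℝ ℝ).prod (-ContinuousLinearMap.snd ℝ ℝ ℝ)

@[simp]
theorem velocityReflection_apply (p : ℝ × ℝ) : velocityReflection p = (p.1, -p.2) := rfl

theorem newtonField_velocityReflection (p : ℝ × ℝ) :
    newtonField V (velocityReflection p) = -velocityReflection (newtonField V p) := by
  simp [newtonField]

theorem contDiffAt_newtonField (hV : ContDiffOn ℝ 2 V (Ioi α₀)) {p : ℝ × ℝ} (hp : α₀ < p.1) :
    ContDiffAt ℝ 1 (newtonField V) p :=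
  contDiffAt_snd.prodMk <| (((hV.deriv_of_isOpen isOpen_Ioi (by norm_num)).contDiffAt
    (Ioi_mem_nhds hp)).comp p contDiffAt_fst).neg

theorem isSolutionOn_newtonField_iff :
    IsSolutionOn (newtonField V) {p | α₀ < p.1} γ s ↔ ∀ t ∈ s, α₀ < (γ t).1 ∧
      HasDerivAt (fun t => (γ t).1) (γ t).2 t ∧
      HasDerivAt (fun t => (γ t).2) (-deriv V (γ t).1) t :=
  forall₂_congr fun t _ =>
    ⟨fun ⟨hd, hΩ⟩ => ⟨hΩ, (ContinuousLinearMap.fst ℝ ℝ ℝ).hasFDerivAt.comp_hasDerivAt t hd,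
      (ContinuousLinearMap.snd ℝ ℝ ℝ).hasFDerivAt.comp_hasDerivAt t hd⟩,
    fun ⟨hΩ, h₁, h₂⟩ => ⟨h₁.prodMk h₂, hΩ⟩⟩

theorem IsSolutionOn.energy_eq (hV : DifferentiableOn ℝ V (Ioi α₀)) (hs : IsOpen s)
    (hs' : IsPreconnected s) (hγ : IsSolutionOn (newtonField V) {p | α₀ < p.1} γ s)
    {t t' : ℝ} (ht : t ∈ s) (ht' : t' ∈ s) : energy V (γ t) = energy V (γ t') := by
  have hderiv : ∀ t ∈ s, HasDerivAt (fun t => energy V (γ t)) 0 t := fun t ht => by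
    obtain ⟨hΩ, h₁, h₂⟩ := isSolutionOn_newtonField_iff.1 hγ t ht
    have hV' := (hV.differentiableAt (Ioi_mem_nhds hΩ)).hasDerivAt
    exact (((h₂.fun_pow 2).div_const 2).add (hV'.comp t h₁)).congr_deriv (by ring)
  exact hs.is_const_of_deriv_eq_zero hs'
    (fun t ht => (hderiv t ht).differentiableAt.differentiableWithinAt)
    (fun t ht => (hderiv t ht).deriv) ht ht'

theorem IsMaximalSolutionOn.tendsto_fst_nhdsLT (hV : ContDiffOn ℝ 2 V (Ioi α₀)) {m : ℝ}
    (hVm : ∀ x, α₀ < x → m ≤ V x)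
    (hγ : IsMaximalSolutionOn (newtonField V) {p | α₀ < p.1} γ a b) (hab : a < b) :
    Tendsto (fun t => (γ t).1) (𝓝[<] b) (𝓝 α₀) := by
  have hsol := isSolutionOn_newtonField_iff.1 hγ.1
  have hmid : (a + b) / 2 ∈ Ioo a b := ⟨by linarith, by linarith⟩
  have hIoo : ∀ᶠ t in 𝓝[<] b, t ∈ Ioo a b := Ioo_mem_nhdsLT hab
  have hbound : ∀ t ∈ Ioo a b, ‖(γ t).2‖ ≤ √(2 * (energy V (γ ((a + b) / 2)) - m)) :=
    fun t ht => by
      have := hγ.1.energy_eq (hV.differentiableOn (by norm_num)) isOpen_Ioo isPreconnected_Ioo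
        ht hmid
      rw [energy] at this
      exact Real.abs_le_sqrt (by linarith [hVm _ (hsol t ht).1])
  obtain ⟨L, hL⟩ := exists_tendsto_nhdsLT_of_hasDerivAt_of_norm_le <|
    hIoo.mono fun t ht => ⟨(hsol t ht).2.1, hbound t ht⟩
  rcases (ge_of_tendsto hL (hIoo.mono fun t ht => (hsol t ht).1.le)).eq_or_lt with rfl | hL'
  · exact hL
  -- a limit inside the phase space would let the solution be continued past `b`
  have hV' : ContinuousAt (deriv V) L :=
    (hV.deriv_of_isOpen (m := 1) isOpen_Ioi (by norm_num)).continuousOn.continuousAt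
      (Ioi_mem_nhds hL')
  obtain ⟨ℓ, hℓ⟩ := exists_tendsto_nhdsLT_of_hasDerivAt_of_norm_le (C := ‖deriv V L‖ + 1) <|
    (hIoo.and ((hV'.tendsto.comp hL).norm.eventually (eventually_lt_nhds (lt_add_one _)))).mono
      fun t ht => ⟨(hsol t ht.1).2.2, by simpa using ht.2.le⟩
  obtain ⟨d, hbd, η, hη, hηγ⟩ := hγ.1.exists_extension (contDiffAt_newtonField hV hL')
    ((isOpen_lt continuous_const continuous_fst).mem_nhds hL') hab (hL.prodMk_nhds hℓ)
  exact absurd (hγ.2 a d η le_rfl hbd.le hη hηγ).2 hbd.ne'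

theorem IsSolutionOn.exists_tendsto_snd_nhdsLT (hV : DifferentiableOn ℝ V (Ioi α₀)) {hstar : ℝ}
    (hVlim : Tendsto V (𝓝[>] α₀) (𝓝 hstar))
    (hγ : IsSolutionOn (newtonField V) {p | α₀ < p.1} γ (Ioo a b)) (hab : a < b)
    (hfst : Tendsto (fun t => (γ t).1) (𝓝[<] b) (𝓝 α₀)) :
    ∃ v, Tendsto (fun t => (γ t).2) (𝓝[<] b) (𝓝 v) := by
  have hsol := isSolutionOn_newtonField_iff.1 hγ
  have hmid : (a + b) / 2 ∈ Ioo a b := ⟨by linarith, by linarith⟩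
  have hIoo : ∀ᶠ t in 𝓝[<] b, t ∈ Ioo a b := Ioo_mem_nhdsLT hab
  have hVγ : Tendsto (fun t => V (γ t).1) (𝓝[<] b) (𝓝 hstar) :=
    hVlim.comp (tendsto_nhdsWithin_iff.2 ⟨hfst, hIoo.mono fun t ht => (hsol t ht).1⟩)
  -- by conservation of energy, `V (γ t).1 → hstar` gives the limit of `(γ t).2 ^ 2`
  refine exists_tendsto_nhdsLT_of_tendsto_sq (c := 2 * (energy V (γ ((a + b) / 2)) - hstar))
    (hIoo.mono fun t ht => (hsol t ht).2.2.continuousAt)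
    (((hVγ.const_sub _).const_mul 2).congr' (hIoo.mono fun t ht => ?_))
  have := hγ.energy_eq hV isOpen_Ioo isPreconnected_Ioo ht hmid
  rw [energy] at this
  linarith

end Newton

theorem stmt8_general (α₀ hstar : ℝ) (hα₀ : α₀ < 0)
    (V : ℝ → ℝ) (hVsmooth : ContDiffOn ℝ 2 V (Set.Ioi α₀))
    (hVlim : Tendsto V (𝓝[>] α₀) (𝓝 hstar))
    (hV0 : V 0 = 0)
    (hsign : ∀ u ∈ Set.Ioi α₀, u ≠ 0 → 0 < u * deriv V u)
    (a b : ℝ) (ha : a < 0) (hb : 0 < b)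
    (u u' : ℝ → ℝ)
    (hsol : ∀ t ∈ Set.Ioo a b,
      α₀ < u t ∧ HasDerivAt u (u' t) t ∧ HasDerivAt u' (-(deriv V (u t))) t)
    (hmax : ∀ (c d : ℝ) (v v' : ℝ → ℝ), c ≤ a → b ≤ d →
      (∀ t ∈ Set.Ioo c d,
        α₀ < v t ∧ HasDerivAt v (v' t) t ∧ HasDerivAt v' (-(deriv V (v t))) t) →
      (∀ t ∈ Set.Ioo a b, v t = u t) → c = a ∧ d = b)
    (hinit : u' 0 = 0) :
    ∃ t₀ : ℝ, 0 < t₀ ∧ b = t₀ ∧ a = -t₀ ∧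
      Tendsto u (𝓝[<] t₀) (𝓝 α₀) ∧ Tendsto u (𝓝[>] (-t₀)) (𝓝 α₀) ∧
      ∃ v₁ : ℝ, Tendsto u' (𝓝[<] t₀) (𝓝 v₁) ∧ Tendsto u' (𝓝[>] (-t₀)) (𝓝 (-v₁)) := by
  set γ : ℝ → ℝ × ℝ := fun t => (u t, u' t)
  have hVdiff : DifferentiableOn ℝ V (Ioi α₀) := hVsmooth.differentiableOn (by norm_num)
  have hγ : IsMaximalSolutionOn (newtonField V) {p | α₀ < p.1} γ a b :=
    ⟨isSolutionOn_newtonField_iff.2 hsol, fun c d η hc hd hη hηγ =>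
      hmax c d _ _ hc hd (isSolutionOn_newtonField_iff.1 hη) fun t ht => congrArg Prod.fst (hηγ ht)⟩
  obtain ⟨rfl, hsymm⟩ := hγ.eq_neg_and_eqOn_comp_neg
    (fun _ => contDiffAt_newtonField hVsmooth) velocityReflection
    newtonField_velocityReflection (fun _ hp => hp) ⟨ha, hb⟩ (by simp [γ, hinit])
  have hu : Tendsto u (𝓝[<] b) (𝓝 α₀) :=
    hγ.tendsto_fst_nhdsLT hVsmooth
      (fun _ => nonneg_of_forall_mul_deriv_pos hα₀ hVdiff hV0 hsign) (by linarith)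
  obtain ⟨v₁, hv₁⟩ := hγ.1.exists_tendsto_snd_nhdsLT hVdiff hVlim (by linarith) hu
  have hsymm' : ∀ᶠ t in 𝓝[>] (-b), u (-t) = u t ∧ -u' (-t) = u' t :=
    mem_of_superset (Ioo_mem_nhdsGT (by linarith)) fun t ht => Prod.ext_iff.1 (hsymm ht)
  refine ⟨b, hb, rfl, rfl, hu, ?_, v₁, hv₁, ?_⟩
  · exact (hu.comp tendsto_neg_nhdsGT_neg).congr' (hsymm'.mono fun t ht => ht.1)
  · exact (hv₁.comp tendsto_neg_nhdsGT_neg).neg.congr' (hsymm'.mono fun t ht => ht.2)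

theorem stmt8 (α₀ hstar : ℝ) (hα₀ : α₀ < 0) (hstar_pos : 0 < hstar)
    (V : ℝ → ℝ) (hVsmooth : ContDiffOn ℝ 2 V (Set.Ioi α₀))
    (hVlim : Tendsto V (𝓝[>] α₀) (𝓝 hstar))
    (hV'lim : Tendsto (deriv V) (𝓝[>] α₀) atBot)
    (hV0 : V 0 = 0) (hV'0 : deriv V 0 = 0) (hV''0 : 0 < deriv (deriv V) 0)
    (hsign : ∀ u ∈ Set.Ioi α₀, u ≠ 0 → 0 < u * deriv V u)
    (a b : ℝ) (ha : a < 0) (hb : 0 < b)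
    (u u' : ℝ → ℝ)
    (hsol : ∀ t ∈ Set.Ioo a b,
      α₀ < u t ∧ HasDerivAt u (u' t) t ∧ HasDerivAt u' (-(deriv V (u t))) t)
    (hmax : ∀ (c d : ℝ) (v v' : ℝ → ℝ), c ≤ a → b ≤ d →
      (∀ t ∈ Set.Ioo c d,
        α₀ < v t ∧ HasDerivAt v (v' t) t ∧ HasDerivAt v' (-(deriv V (v t))) t) →
      (∀ t ∈ Set.Ioo a b, v t = u t) → c = a ∧ d = b)
    (hinit : u' 0 = 0)
    (henergy : hstar ≤ (1/2) * (u' 0) ^ 2 + V (u 0)) :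
    ∃ t₀ : ℝ, 0 < t₀ ∧ b = t₀ ∧ a = -t₀ ∧
      Tendsto u (𝓝[<] t₀) (𝓝 α₀) ∧ Tendsto u (𝓝[>] (-t₀)) (𝓝 α₀) ∧
      ∃ v₁ : ℝ, Tendsto u' (𝓝[<] t₀) (𝓝 v₁) ∧ Tendsto u' (𝓝[>] (-t₀)) (𝓝 (-v₁)) :=
  stmt8_general α₀ hstar hα₀ V hVsmooth hVlim hV0 hsign a b ha hb u u' hsol hmax hinit
end

section
/- Under the hypotheses on V (weak singularity at α₀, center at 0, V''(u) > 0 for u > β, and u/V'(u) → +∞ as u → +∞), the extended period function satisfies: for h > h*, T(h) ≥ 2√(u⁺(h) - β)/√(V'(u⁺(h))), where u⁺(h) is the positive solution of V(u) = h; consequently T(h) → +∞ as h → +∞. -/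
/-!
Split the period integral at `β`. On `(α₀, β]` the potential stays below `h* < h`, so that part
is a nonnegative integral of a bounded function. On `[β, u⁺]` the derivative `V'` is increasing,
so the mean value theorem gives `V'(β) (u⁺ - u) ≤ h - V u ≤ V'(u⁺) (u⁺ - u)`: the lower bound
makes the integrand integrable, the upper one bounds the integral below by
`∫ (V'(u⁺) (u⁺ - u))^(-1/2) du = 2 √(u⁺ - β) / √(V'(u⁺))`. Since `u⁺(h) → ∞` and
`u / V'(u) → ∞`, this lower bound tends to infinity.
-/

open Real Filter Set Topology intervalIntegral

section

open MeasureTheory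

theorem rpow_neg_one_half_eq_one_div_sqrt (x : ℝ) : x ^ (-(1 / 2) : ℝ) = 1 / √x := by
  rcases le_or_gt 0 x with hx | hx
  · rw [rpow_neg hx, ← sqrt_eq_rpow, one_div]
  · -- for `x < 0` both sides are junk values equal to `0`, the left one through `cos (π / 2) = 0`
    rw [sqrt_eq_zero_of_nonpos hx.le, div_zero, rpow_def_of_neg hx,
      show (-(1 / 2) : ℝ) * π = -(π / 2) by ring, cos_neg, cos_pi_div_two, mul_zero]

theorem intervalIntegrable_one_div_sqrt_sub (b c : ℝ) :
    IntervalIntegrable (fun u => 1 / √(c - u)) volume b c := by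
  simp_rw [← rpow_neg_one_half_eq_one_div_sqrt]
  simpa only [sub_sub_cancel, sub_zero] using
    (intervalIntegrable_rpow' (a := c - b) (b := 0) (by norm_num)).comp_sub_left c

theorem integral_one_div_sqrt_sub (b c : ℝ) : ∫ u in b..c, 1 / √(c - u) = 2 * √(c - b) := by
  simp_rw [← rpow_neg_one_half_eq_one_div_sqrt]
  rw [integral_comp_sub_left (fun x : ℝ => x ^ (-(1 / 2) : ℝ)) c, sub_self,
    integral_rpow (Or.inl (by norm_num)), show (-(1 / 2) : ℝ) + 1 = 1 / 2 by norm_num,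
    zero_rpow (by norm_num), ← sqrt_eq_rpow]
  ring

theorem intervalIntegrable_one_div_sqrt_of_le {g : ℝ → ℝ} {a b m : ℝ} (hab : a ≤ b)
    (hg : ContinuousOn g (Ioc a b)) (hm : 0 < m) (hmg : ∀ u ∈ Ioc a b, m ≤ g u) :
    IntervalIntegrable (fun u => 1 / √(g u)) volume a b := by
  refine IntervalIntegrable.mono_fun' (g := fun _ => 1 / √m) intervalIntegrable_const ?_ ?_
  · rw [uIoc_of_le hab]
    refine ContinuousOn.aestronglyMeasurable ?_ measurableSet_Ioc
    exact continuousOn_const.div hg.sqrt fun u hu => (sqrt_pos.2 (hm.trans_le (hmg u hu))).ne'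
  · rw [uIoc_of_le hab, EventuallyLE, ae_restrict_iff' measurableSet_Ioc]
    refine .of_forall fun u hu => ?_
    rw [norm_of_nonneg (by positivity)]
    exact one_div_le_one_div_of_le (sqrt_pos.2 hm) (sqrt_le_sqrt (hmg u hu))

theorem intervalIntegrable_one_div_sqrt_of_mul_sub_le {g : ℝ → ℝ} {b c k : ℝ} (hbc : b ≤ c)
    (hk : 0 < k) (hg : ContinuousOn g (Ioo b c)) (hkg : ∀ u ∈ Ioo b c, k * (c - u) ≤ g u) :
    IntervalIntegrable (fun u => 1 / √(g u)) volume b c := by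
  have hpos : ∀ u ∈ Ioo b c, 0 < k * (c - u) := fun u hu => mul_pos hk (sub_pos.2 hu.2)
  refine IntervalIntegrable.mono_fun' ((intervalIntegrable_one_div_sqrt_sub b c).const_mul
    (1 / √k)) ?_ ?_ <;>
    rw [uIoc_of_le hbc, ← Measure.restrict_congr_set Ioo_ae_eq_Ioc]
  · refine ContinuousOn.aestronglyMeasurable ?_ measurableSet_Ioo
    exact continuousOn_const.div hg.sqrt fun u hu =>
      (sqrt_pos.2 ((hpos u hu).trans_le (hkg u hu))).ne'
  · rw [EventuallyLE, ae_restrict_iff' measurableSet_Ioo]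
    refine .of_forall fun u hu => ?_
    rw [norm_of_nonneg (by positivity), one_div_mul_one_div, ← sqrt_mul hk.le]
    exact one_div_le_one_div_of_le (sqrt_pos.2 (hpos u hu)) (sqrt_le_sqrt (hkg u hu))

theorem le_integral_one_div_sqrt_of_le_mul_sub {g : ℝ → ℝ} {b c K : ℝ} (hbc : b ≤ c)
    (hK : 0 < K) (hint : IntervalIntegrable (fun u => 1 / √(g u)) volume b c)
    (hg : ∀ u ∈ Ioo b c, 0 < g u) (hgK : ∀ u ∈ Ioo b c, g u ≤ K * (c - u)) :
    2 * √(c - b) / √K ≤ ∫ u in b..c, 1 / √(g u) := by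
  calc 2 * √(c - b) / √K = ∫ u in b..c, 1 / √K * (1 / √(c - u)) := by
        rw [intervalIntegral.integral_const_mul, integral_one_div_sqrt_sub]; ring
    _ ≤ ∫ u in b..c, 1 / √(g u) := by
        refine integral_mono_on_of_le_Ioo hbc
          ((intervalIntegrable_one_div_sqrt_sub b c).const_mul _) hint fun u hu => ?_
        rw [one_div_mul_one_div, ← sqrt_mul hK.le]
        exact one_div_le_one_div_of_le (sqrt_pos.2 (hg u hu)) (sqrt_le_sqrt (hgK u hu))

theorem le_integral_one_div_sqrt_sub_of_monotoneOn_deriv {V : ℝ → ℝ} {a b c h m : ℝ}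
    (hab : a < b) (hbc : b ≤ c) (hV : ContinuousOn V (Ioc a c))
    (hVd : DifferentiableOn ℝ V (Ioo b c)) (hV' : MonotoneOn (deriv V) (Icc b c))
    (hV'b : 0 < deriv V b) (hVm : ∀ u ∈ Ioc a b, V u ≤ m) (hmh : m < h) (hVc : V c = h) :
    2 * √(c - b) / √(deriv V c) ≤ ∫ u in a..c, 1 / √(h - V u) := by
  have hVbc : ContinuousOn V (Icc b c) := hV.mono (Icc_subset_Ioc_iff hbc |>.2 ⟨hab, le_rfl⟩)
  rw [← interior_Icc] at hVd
  have hV'le : ∀ x ∈ interior (Icc b c), deriv V b ≤ deriv V x ∧ deriv V x ≤ deriv V c :=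
    fun x hx => ⟨hV' (left_mem_Icc.2 hbc) (interior_subset hx) (interior_subset hx).1,
      hV' (interior_subset hx) (right_mem_Icc.2 hbc) (interior_subset hx).2⟩
  have hlow : ∀ u ∈ Ioo b c, deriv V b * (c - u) ≤ h - V u := fun u hu =>
    hVc ▸ (convex_Icc b c).mul_sub_le_image_sub_of_le_deriv hVbc hVd (fun x hx => (hV'le x hx).1)
      u (Ioo_subset_Icc_self hu) c (right_mem_Icc.2 hbc) hu.2.le
  have hup : ∀ u ∈ Ioo b c, h - V u ≤ deriv V c * (c - u) := fun u hu =>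
    hVc ▸ (convex_Icc b c).image_sub_le_mul_sub_of_deriv_le hVbc hVd (fun x hx => (hV'le x hx).2)
      u (Ioo_subset_Icc_self hu) c (right_mem_Icc.2 hbc) hu.2.le
  have hint_ab : IntervalIntegrable (fun u => 1 / √(h - V u)) volume a b :=
    intervalIntegrable_one_div_sqrt_of_le hab.le
      (continuousOn_const.sub (hV.mono (Ioc_subset_Ioc_right hbc))) (sub_pos.2 hmh)
      fun u hu => by linarith [hVm u hu]
  have hint_bc : IntervalIntegrable (fun u => 1 / √(h - V u)) volume b c :=
    intervalIntegrable_one_div_sqrt_of_mul_sub_le hbc hV'b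
      (continuousOn_const.sub (hV.mono fun u hu => ⟨hab.trans hu.1, hu.2.le⟩)) hlow
  calc 2 * √(c - b) / √(deriv V c) ≤ ∫ u in b..c, 1 / √(h - V u) :=
        le_integral_one_div_sqrt_of_le_mul_sub hbc (hV'b.trans_le (hV' (left_mem_Icc.2 hbc)
          (right_mem_Icc.2 hbc) hbc)) hint_bc
          (fun u hu => (mul_pos hV'b (sub_pos.2 hu.2)).trans_le (hlow u hu)) hup
    _ ≤ (∫ u in a..b, 1 / √(h - V u)) + ∫ u in b..c, 1 / √(h - V u) :=
        le_add_of_nonneg_left (integral_nonneg hab.le fun u _ => by positivity)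
    _ = ∫ u in a..c, 1 / √(h - V u) := integral_add_adjacent_intervals hint_ab hint_bc

end

theorem apply_le_of_tendsto_nhdsGT_of_mul_deriv_pos {V : ℝ → ℝ} {a b L : ℝ} (ha : a < 0)
    (hV : ContinuousOn V (Ioi a)) (hsign : ∀ u ∈ Ioi a, u ≠ 0 → 0 < u * deriv V u)
    (hlim : Tendsto V (𝓝[>] a) (𝓝 L)) (hVb : V b = L) : ∀ u ∈ Ioc a b, V u ≤ L := by
  intro u hu
  rcases le_or_gt u 0 with hu0 | hu0
  · have hanti : StrictAntiOn V (Ioc a 0) :=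
      strictAntiOn_of_deriv_neg (convex_Ioc a 0) (hV.mono Ioc_subset_Ioi_self) fun x hx => by
        rw [interior_Ioc] at hx
        exact neg_of_mul_pos_right (hsign x hx.1 hx.2.ne) hx.2.le
    refine ge_of_tendsto hlim ?_
    filter_upwards [Ioo_mem_nhdsGT hu.1] with y hy
    exact (hanti ⟨hy.1, hy.2.le.trans hu0⟩ ⟨hu.1, hu0⟩ hy.2).le
  · have hmono : StrictMonoOn V (Ici 0) :=
      strictMonoOn_of_deriv_pos (convex_Ici 0) (hV.mono fun x hx => ha.trans_le hx) fun x hx => by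
        rw [interior_Ici] at hx
        exact pos_of_mul_pos_right (hsign x (ha.trans hx) hx.ne') hx.le
    exact hVb ▸ hmono.monotoneOn hu0.le (hu0.le.trans hu.2) hu.2

theorem tendsto_atTop_of_continuousOn_apply_eq {V u : ℝ → ℝ} {b : ℝ}
    (hV : ContinuousOn V (Ici b)) (hu : ∀ᶠ h in atTop, b ≤ u h ∧ V (u h) = h) :
    Tendsto u atTop atTop := by
  refine tendsto_atTop.2 fun M => ?_
  obtain ⟨C, hC⟩ :=
    isCompact_Icc.bddAbove_image (hV.mono (Icc_subset_Ici_self : Icc b M ⊆ Ici b))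
  filter_upwards [hu, eventually_gt_atTop C] with h ⟨hbu, hVu⟩ hCh
  by_contra! huM
  exact hCh.not_ge (hVu ▸ hC (mem_image_of_mem V ⟨hbu, huM.le⟩))

theorem tendsto_sub_div_atTop_of_tendsto_div {f : ℝ → ℝ} (b : ℝ)
    (hf : Tendsto (fun u => u / f u) atTop atTop) :
    Tendsto (fun u => (u - b) / f u) atTop atTop := by
  have hone : Tendsto (fun u : ℝ => 1 - b / u) atTop (𝓝 1) := by
    simpa using tendsto_const_nhds.sub ((tendsto_const_nhds (x := b)).div_atTop tendsto_id)
  refine (hf.atTop_mul_pos one_pos hone).congr' ?_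
  filter_upwards [eventually_ne_atTop 0] with u hu
  field_simp

theorem stmt9_general (α₀ hstar β : ℝ) (hα₀ : α₀ < 0) (hβ : 0 < β)
    (V : ℝ → ℝ) (hVsmooth : ContDiffOn ℝ 2 V (Set.Ioi α₀))
    (hVlim : Tendsto V (𝓝[>] α₀) (𝓝 hstar))
    (hsign : ∀ u ∈ Set.Ioi α₀, u ≠ 0 → 0 < u * deriv V u)
    (hVβ : V β = hstar)
    (hconv : ∀ u : ℝ, β < u → 0 < deriv (deriv V) u)
    (hgrowth : Tendsto (fun u : ℝ => u / deriv V u) atTop atTop)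
    (uplus : ℝ → ℝ) (huplus : ∀ h : ℝ, hstar < h → β < uplus h ∧ V (uplus h) = h)
    (T : ℝ → ℝ)
    (hT : ∀ h : ℝ, hstar < h →
      T h = Real.sqrt 2 * ∫ u in α₀..uplus h, 1 / Real.sqrt (h - V u)) :
    (∀ h : ℝ, hstar < h →
      2 * Real.sqrt (uplus h - β) / Real.sqrt (deriv V (uplus h)) ≤ T h) ∧
    Tendsto T atTop atTop := by
  have hIci : Ici β ⊆ Ioi α₀ := fun u hu => (hα₀.trans hβ).trans_le hu
  have hV : ContinuousOn V (Ioi α₀) := hVsmooth.continuousOn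
  have hV'β : 0 < deriv V β := pos_of_mul_pos_right (hsign β (hα₀.trans hβ) hβ.ne') hβ.le
  have hV'mono : MonotoneOn (deriv V) (Ici β) :=
    (strictMonoOn_of_deriv_pos (convex_Ici β)
      ((hVsmooth.continuousOn_deriv_of_isOpen isOpen_Ioi one_le_two).mono hIci)
      (by simpa using hconv)).monotoneOn
  have hbound : ∀ h, hstar < h → 2 * √(uplus h - β) / √(deriv V (uplus h)) ≤ T h := by
    intro h hh
    obtain ⟨hβu, hVu⟩ := huplus h hh
    rw [hT h hh]
    refine (le_integral_one_div_sqrt_sub_of_monotoneOn_deriv (hα₀.trans hβ) hβu.le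
      (hV.mono Ioc_subset_Ioi_self) ((hVsmooth.differentiableOn two_ne_zero).mono
        fun u hu => hIci hu.1.le) (hV'mono.mono Icc_subset_Ici_self) hV'β
      (apply_le_of_tendsto_nhdsGT_of_mul_deriv_pos hα₀ hV hsign hVlim hVβ) hh hVu).trans ?_
    exact le_mul_of_one_le_left (integral_nonneg (hα₀.trans (hβ.trans hβu)).le
      fun u _ => by positivity) one_lt_sqrt_two.le
  have huplus_tendsto : Tendsto uplus atTop atTop :=
    tendsto_atTop_of_continuousOn_apply_eq (hV.mono hIci)
      ((eventually_gt_atTop hstar).mono fun h hh => (huplus h hh).imp_left le_of_lt)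
  refine ⟨hbound, tendsto_atTop_mono' atTop ?_ (((tendsto_sqrt_atTop.comp
    ((tendsto_sub_div_atTop_of_tendsto_div β hgrowth).comp huplus_tendsto)).const_mul_atTop
      two_pos))⟩
  filter_upwards [eventually_gt_atTop hstar] with h hh
  rw [Function.comp_apply, Function.comp_apply, sqrt_div (sub_nonneg.2 (huplus h hh).1.le),
    ← mul_div_assoc]
  exact hbound h hh

theorem stmt9 (α₀ hstar β : ℝ) (hα₀ : α₀ < 0) (hstar_pos : 0 < hstar) (hβ : 0 < β)
    (V : ℝ → ℝ) (hVsmooth : ContDiffOn ℝ 2 V (Set.Ioi α₀))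
    (hVlim : Tendsto V (𝓝[>] α₀) (𝓝 hstar))
    (hV'lim : Tendsto (deriv V) (𝓝[>] α₀) atBot)
    (hV0 : V 0 = 0) (hV'0 : deriv V 0 = 0) (hV''0 : 0 < deriv (deriv V) 0)
    (hsign : ∀ u ∈ Set.Ioi α₀, u ≠ 0 → 0 < u * deriv V u)
    (hVβ : V β = hstar)
    (hconv : ∀ u : ℝ, β < u → 0 < deriv (deriv V) u)
    (hgrowth : Tendsto (fun u : ℝ => u / deriv V u) atTop atTop)
    (uplus : ℝ → ℝ) (huplus : ∀ h : ℝ, hstar < h → β < uplus h ∧ V (uplus h) = h)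
    (T : ℝ → ℝ)
    (hT : ∀ h : ℝ, hstar < h →
      T h = Real.sqrt 2 * ∫ u in α₀..uplus h, 1 / Real.sqrt (h - V u)) :
    (∀ h : ℝ, hstar < h →
      2 * Real.sqrt (uplus h - β) / Real.sqrt (deriv V (uplus h)) ≤ T h) ∧
    Tendsto T atTop atTop :=
  stmt9_general α₀ hstar β hα₀ hβ V hVsmooth hVlim hsign hVβ hconv hgrowth uplus huplus T hT
end

section
/- For V(u) = -p₀u - u^{1-α}/(1-α) with p₀ < 0 and 1/2 < α < 1, the function φ(u) = ((V')² - 2VV'')/(V')³ satisfies φ(u) > 0 for all u > 0 with V'(u) > 0. -/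
open Real Filter Set Topology

theorem stmt14 (α p₀ : ℝ) (hα : 1/2 < α) (hα1 : α < 1) (hp : p₀ < 0)
    (V : ℝ → ℝ) (hV : ∀ u : ℝ, V u = -p₀ * u - u ^ (1 - α) / (1 - α)) :
    ∀ u : ℝ, (-p₀) ^ (-(1/α)) < u →
      0 < (deriv V u ^ 2 - 2 * V u * iteratedDeriv 2 V u) / (deriv V u) ^ 3 := by
  intro u hu
  have hα0 : (0:ℝ) < α := by linarith
  have ha : (0:ℝ) < -p₀ := by linarith
  have hu0 : 0 < u := lt_trans (Real.rpow_pos_of_pos ha _) hu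
  have h1α : (0:ℝ) < 1 - α := by linarith
  -- derivative of V on positive reals
  have hd : ∀ v : ℝ, 0 < v → HasDerivAt V (-p₀ - v ^ (-α)) v := by
    intro v hv
    have h1 : HasDerivAt (fun x : ℝ => -p₀ * x) (-p₀) v := by
      simpa using (hasDerivAt_id v).const_mul (-p₀)
    have h2 : HasDerivAt (fun x : ℝ => x ^ (1 - α) / (1 - α))
        ((1 - α) * v ^ (1 - α - 1) / (1 - α)) v :=
      (Real.hasDerivAt_rpow_const (Or.inl hv.ne')).div_const _
    have := (h1.sub h2)
    have heq : -p₀ - (1 - α) * v ^ (1 - α - 1) / (1 - α) = -p₀ - v ^ (-α) := by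
      rw [show (1 - α - 1 : ℝ) = -α by ring]
      field_simp
    have hVf : V = fun x : ℝ => -p₀ * x - x ^ (1 - α) / (1 - α) := funext hV
    rw [hVf]
    exact heq ▸ this
  have hderiv : ∀ v : ℝ, 0 < v → deriv V v = -p₀ - v ^ (-α) := fun v hv => (hd v hv).deriv
  -- second derivative
  have hd2 : HasDerivAt (fun v : ℝ => -p₀ - v ^ (-α)) (α * u ^ (-α - 1)) u := by
    have := ((Real.hasDerivAt_rpow_const (p := -α) (Or.inl hu0.ne'))).const_sub (-p₀)
    refine this.congr_deriv ?_
    ring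
  have hev : deriv V =ᶠ[nhds u] fun v : ℝ => -p₀ - v ^ (-α) := by
    filter_upwards [IsOpen.mem_nhds isOpen_Ioi hu0] with v hv
    exact hderiv v hv
  have h2deriv : iteratedDeriv 2 V u = α * u ^ (-α - 1) := by
    rw [show (2:ℕ) = 1 + 1 from rfl, iteratedDeriv_succ, iteratedDeriv_one,
      hev.deriv_eq, hd2.deriv]
  -- key quantities
  set a : ℝ := -p₀ with ha'
  set x : ℝ := u ^ (-α) with hx'
  have hx0 : 0 < x := Real.rpow_pos_of_pos hu0 _
  have hxa : x < a := by
    have := Real.rpow_lt_rpow_of_neg (Real.rpow_pos_of_pos ha _) hu (neg_neg_iff_pos.mpr hα0)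
    calc x < (a ^ (-(1/α))) ^ (-α) := this
    _ = a ^ ((-(1/α)) * (-α)) := (Real.rpow_mul ha.le _ _).symm
    _ = a := by rw [show (-(1/α)) * (-α) = 1 by field_simp, Real.rpow_one]
  have hVu : V u = a * u - u * x / (1 - α) := by
    rw [hV u, show u ^ (1-α) = u * x by
      rw [hx', show (1-α:ℝ) = 1 + -α by ring, Real.rpow_add hu0, Real.rpow_one]]
  have hV2 : iteratedDeriv 2 V u = α * x / u := by
    rw [h2deriv, hx', show (-α - 1 : ℝ) = -α + (-1) by ring,
      Real.rpow_add hu0, Real.rpow_neg_one]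
    field_simp
  have hV1 : deriv V u = a - x := hderiv u hu0
  rw [hV1, hVu, hV2]
  have hden : 0 < (a - x) ^ 3 := pow_pos (by linarith) 3
  apply div_pos _ hden
  have expand : (a - x)^2 - 2 * (a * u - u * x / (1-α)) * (α * x / u)
      = ((1-α) * (a - (1+α)*x)^2 + α^2 * (1+α) * x^2) / (1-α) := by
    field_simp
    ring
  rw [expand]
  have hnum : 0 < (1-α) * (a - (1+α)*x)^2 + α^2 * (1+α) * x^2 := by
    have h1 : 0 ≤ (1-α) * (a - (1+α)*x)^2 := mul_nonneg h1α.le (sq_nonneg _)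
    have h2 : 0 < α^2 * (1+α) * x^2 := by positivity
    linarith
  exact div_pos hnum h1α
end

section
/- Consider ü = u^{-α} + p(t) with 0 < α < 1 and p Lipschitz, p₂ ≤ p(t) ≤ p₁ < 0, and set η = ((1-α)(-p₁))^{-1/α}, defined so that the frozen-p₁ system's period annulus has projection (0, η). Then there exists an increasing sequence γ₁ < γ₂ < ⋯ with γ₁ > √(2(p₁-p₂)η) such that for every n and every (t₀, v₀) with v₀ > γₙ, the bouncing solution starting at u(t₀) = 0 with initial velocity v₀ experiences at least n collisions with the singularity u = 0 in forward time. -/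
open Real Filter Set Topology

/-- A bouncing solution of `ü = u^{-α} + p(t)`: continuous, nonnegative, with
discrete zero set, solving the equation away from the zeros, and with elastic
collisions (the one-sided limits of the velocity exist and are opposite). -/
def IsBouncingSolution (α : ℝ) (p : ℝ → ℝ) (u : ℝ → ℝ) : Prop :=
  Continuous u ∧ (∀ t : ℝ, 0 ≤ u t) ∧
  (∀ t : ℝ, u t = 0 → ∀ᶠ s in 𝓝[≠] t, u s ≠ 0) ∧
  (∀ t : ℝ, u t ≠ 0 → DifferentiableAt ℝ u t ∧
    HasDerivAt (deriv u) ((u t) ^ (-α) + p t) t) ∧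
  (∀ t₀ : ℝ, u t₀ = 0 → ∃ v : ℝ,
    Tendsto (deriv u) (𝓝[>] t₀) (𝓝 v) ∧ Tendsto (deriv u) (𝓝[<] t₀) (𝓝 (-v)))

namespace S16

noncomputable def Hc (α c : ℝ) : ℝ := c ^ (-(1/α) : ℝ)
noncomputable def Va (α c x : ℝ) : ℝ := -(x ^ (1-α : ℝ))/(1-α) + c * x
noncomputable def En (α c : ℝ) (u : ℝ → ℝ) (t : ℝ) : ℝ := (deriv u t)^2/2 + Va α c (u t)
noncomputable def Th (α a : ℝ) : ℝ := Hc α ((1-α)*a/2) + 2 * Hc α (a/2) + 2/a + 1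



lemma Hc_pos {α c : ℝ} (hc : 0 < c) : 0 < Hc α c := Real.rpow_pos_of_pos hc _

lemma Hc_rpow {α c : ℝ} (hα : 0 < α) (hc : 0 < c) : (Hc α c) ^ (-α : ℝ) = c := by
  unfold Hc
  rw [← Real.rpow_mul hc.le]
  rw [show (-(1/α)) * (-α) = 1 by field_simp, Real.rpow_one]

lemma rpow_neg_anti {α x y : ℝ} (hα : 0 < α) (hx : 0 < x) (hxy : x ≤ y) :
    y ^ (-α : ℝ) ≤ x ^ (-α : ℝ) := by
  rw [Real.rpow_neg hx.le, Real.rpow_neg (hx.trans_le hxy).le]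
  exact inv_anti₀ (Real.rpow_pos_of_pos hx α) (Real.rpow_le_rpow hx.le hxy hα.le)

lemma rpow_one_sub {α x : ℝ} (hx : 0 < x) : x ^ (1 - α : ℝ) = x * x ^ (-α : ℝ) := by
  rw [show (1 - α : ℝ) = 1 + (-α) by ring, Real.rpow_add hx, Real.rpow_one]


lemma Va_zero {α c : ℝ} (hα1 : α < 1) : Va α c 0 = 0 := by
  unfold Va
  rw [Real.zero_rpow (by linarith)]
  ring

lemma Va_le {α c x : ℝ} (hα1 : α < 1) (hx : 0 ≤ x) : Va α c x ≤ c * x := by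
  unfold Va
  have h1 : (0:ℝ) ≤ x ^ (1-α : ℝ) := Real.rpow_nonneg hx _
  have h2 : (0:ℝ) < 1 - α := by linarith
  have : 0 ≤ x ^ (1-α:ℝ) / (1-α) := div_nonneg h1 h2.le
  rw [neg_div]
  linarith

/-- for `0 ≤ x ≤ η = Hc α ((1-α)a)` one has `Va α a x ≤ 0`. -/
lemma Va_nonpos {α a x : ℝ} (hα : 0 < α) (hα1 : α < 1) (ha : 0 < a)
    (hx : 0 ≤ x) (hxη : x ≤ Hc α ((1-α)*a)) : Va α a x ≤ 0 := by
  rcases eq_or_lt_of_le hx with h | h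
  · rw [← h, Va_zero hα1]
  · have hη : (0:ℝ) < (1-α)*a := by nlinarith
    have h1 : ((1-α)*a : ℝ) ≤ x ^ (-α:ℝ) := by
      have := rpow_neg_anti hα h hxη
      rwa [Hc_rpow hα hη] at this
    unfold Va
    rw [rpow_one_sub h]
    have h2 : (0:ℝ) < 1 - α := by linarith
    have h3 : a * x * (1-α) ≤ x * x ^ (-α:ℝ) := by
      calc a * x * (1-α) = x * ((1-α)*a) := by ring
      _ ≤ x * x ^ (-α:ℝ) := by nlinarith
    rw [neg_div, ← sub_nonpos]
    have h4 : a * x - x * x ^ (-α:ℝ) / (1-α) ≤ 0 := by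
      rw [sub_nonpos, le_div_iff₀ h2]; linarith
    linarith

lemma Va_pos_gt {α a x : ℝ} (hα : 0 < α) (hα1 : α < 1) (ha : 0 < a)
    (hx : 0 ≤ x) (hpos : 0 < Va α a x) : Hc α ((1-α)*a) < x := by
  by_contra h
  push_neg at h
  exact absurd (Va_nonpos hα hα1 ha hx h) (by linarith)

lemma Va_lower {α a x : ℝ} (hα : 0 < α) (hα1 : α < 1) (ha : 0 < a)
    (hx : Hc α ((1-α)*a/2) ≤ x) : a/2 * x ≤ Va α a x := by
  have hc : (0:ℝ) < (1-α)*a/2 := by nlinarith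
  have hxpos : 0 < x := lt_of_lt_of_le (Hc_pos hc) hx
  have h1 : x ^ (-α:ℝ) ≤ (1-α)*a/2 := by
    have := rpow_neg_anti hα (Hc_pos hc) hx
    rwa [Hc_rpow hα hc] at this
  unfold Va
  rw [rpow_one_sub hxpos]
  have h2 : (0:ℝ) < 1 - α := by linarith
  have h3 : x * x ^ (-α:ℝ) ≤ x * ((1-α)*a/2) := by nlinarith
  rw [neg_div, ← sub_le_iff_le_add']
  have : x * x^(-α:ℝ) / (1-α) ≤ x * a/2 := by
    rw [div_le_iff₀ h2]; nlinarith
  linarith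

lemma Va_strictMono {α a : ℝ} (hα : 0 < α) (hα1 : α < 1) (ha : 0 < a) :
    StrictMonoOn (Va α a) (Ici (Hc α ((1-α)*a))) := by
  have hc : (0:ℝ) < (1-α)*a := by nlinarith
  have hηpos := Hc_pos (c := (1-α)*a) (α := α) hc
  apply strictMonoOn_of_deriv_pos (convex_Ici _)
  · apply ContinuousOn.add
    · apply ContinuousOn.div_const
      apply ContinuousOn.neg
      intro x hx
      exact (Real.continuousAt_rpow_const x _ (Or.inl (by
        have : 0 < x := lt_of_lt_of_le hηpos hx
        positivity))).continuousWithinAt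
    · exact (continuous_const.mul continuous_id).continuousOn
  · intro x hx
    rw [interior_Ici] at hx
    have hxpos : 0 < x := hηpos.trans hx
    have hD : HasDerivAt (Va α a) (a - x ^ (-α:ℝ)) x := by
      have h1 : HasDerivAt (fun y : ℝ => y ^ (1-α:ℝ)) ((1-α) * x ^ (1-α-1:ℝ)) x := by
        simpa using Real.hasDerivAt_rpow_const (x := x) (p := 1-α) (Or.inl hxpos.ne')
      have h2 := ((h1.neg.div_const (1-α)).add ((hasDerivAt_id x).const_mul a))
      refine h2.congr_deriv ?_
      rw [show (1-α-1 : ℝ) = -α by ring]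
      have h3 : (1-α : ℝ) ≠ 0 := by linarith
      field_simp
      ring
    rw [hD.deriv]
    have h1 : x ^ (-α:ℝ) ≤ (1-α)*a := by
      have := rpow_neg_anti hα hηpos hx.le
      rwa [Hc_rpow hα hc] at this
    nlinarith

/-- monotonicity helper -/
lemma my_mono {f f' : ℝ → ℝ} {s e : ℝ} (hse : s ≤ e)
    (hd : ∀ t ∈ Icc s e, HasDerivAt f (f' t) t)
    (h0 : ∀ t ∈ Ioo s e, 0 ≤ f' t) : f s ≤ f e := by
  have hm : MonotoneOn f (Icc s e) := by
    apply monotoneOn_of_deriv_nonneg (convex_Icc s e)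
    · exact fun t ht => (hd t ht).continuousAt.continuousWithinAt
    · intro t ht
      rw [interior_Icc] at ht
      exact ((hd t (Ioo_subset_Icc_self ht)).differentiableAt).differentiableWithinAt
    · intro t ht
      rw [interior_Icc] at ht
      rw [(hd t (Ioo_subset_Icc_self ht)).deriv]
      exact h0 t ht
  exact hm (left_mem_Icc.2 hse) (right_mem_Icc.2 hse) hse

lemma my_anti {f f' : ℝ → ℝ} {s e : ℝ} (hse : s ≤ e)
    (hd : ∀ t ∈ Icc s e, HasDerivAt f (f' t) t)
    (h0 : ∀ t ∈ Ioo s e, f' t ≤ 0) : f e ≤ f s := by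
  have h := my_mono (f := fun t => -f t) (f' := fun t => -f' t) hse
    (fun t ht => (hd t ht).neg) (fun t ht => by simpa using h0 t ht)
  simp only [neg_le_neg_iff] at h
  exact h

lemma my_strictAnti {f f' : ℝ → ℝ} {s e : ℝ} (hse : s < e)
    (hd : ∀ t ∈ Icc s e, HasDerivAt f (f' t) t)
    (h0 : ∀ t ∈ Ioo s e, f' t < 0) : f e < f s := by
  have hm : StrictAntiOn f (Icc s e) := by
    apply strictAntiOn_of_deriv_neg (convex_Icc s e)
    · exact fun t ht => (hd t ht).continuousAt.continuousWithinAt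
    · intro t ht
      rw [interior_Icc] at ht
      rw [(hd t (Ioo_subset_Icc_self ht)).deriv]
      exact h0 t ht
  exact hm (left_mem_Icc.2 hse.le) (right_mem_Icc.2 hse.le) hse


lemma Th_pos {α a : ℝ} (hα : 0 < α) (hα1 : α < 1) (ha : 0 < a) : 0 < Th α a := by
  have h1 : 0 < Hc α ((1-α)*a/2) := Hc_pos (by nlinarith)
  have h2 : 0 < Hc α (a/2) := Hc_pos (by linarith)
  have h3 : 0 < 2/a := by positivity
  have h4 : Th α a = Hc α ((1-α)*a/2) + 2 * Hc α (a/2) + 2/a + 1 := rfl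
  rw [h4]
  linarith

lemma hasDerivAt_En {α : ℝ} {p u : ℝ → ℝ} (hα1 : α < 1)
    (hu : IsBouncingSolution α p u) (c : ℝ) {t : ℝ} (ht : u t ≠ 0) :
    HasDerivAt (En α c u) (deriv u t * (p t + c)) t := by
  obtain ⟨hcont, hnn, hiso, hode, hel⟩ := hu
  have hdu : HasDerivAt u (deriv u t) t := (hode t ht).1.hasDerivAt
  have hddu : HasDerivAt (deriv u) ((u t) ^ (-α) + p t) t := (hode t ht).2
  have hne : (1 - α : ℝ) ≠ 0 := by linarith
  have h1 : HasDerivAt (fun s => (deriv u s)^2/2)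
      (deriv u t * ((u t) ^ (-α) + p t)) t := by
    have h2 := (hddu.mul hddu).div_const 2
    have heq : (fun s => (deriv u s)^2/2) = fun s => deriv u s * deriv u s / 2 := by
      ext s; ring
    rw [heq]
    refine h2.congr_deriv ?_
    ring
  have h3 : HasDerivAt (fun s => (u s) ^ (1-α:ℝ))
      ((1-α) * (u t) ^ (-α:ℝ) * deriv u t) t := by
    have h := hdu.rpow_const (p := 1-α) (Or.inl ht)
    rw [show (1-α-1 : ℝ) = -α by ring] at h
    convert h using 1
    ring
  have h4 : HasDerivAt (fun s => Va α c (u s))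
      ((c - (u t) ^ (-α:ℝ)) * deriv u t) t := by
    have h5 := (h3.neg.div_const (1-α)).add (hdu.const_mul c)
    have heq : (fun s => Va α c (u s)) =
        fun s => -((u s) ^ (1-α:ℝ))/(1-α) + c * u s := rfl
    rw [heq]
    refine h5.congr_deriv ?_
    field_simp
    ring
  have h6 := h1.add h4
  have heq : En α c u = fun s => (deriv u s)^2/2 + Va α c (u s) := rfl
  rw [heq]
  refine h6.congr_deriv ?_
  ring

lemma En_tendsto {α : ℝ} {p u : ℝ → ℝ} (hα1 : α < 1)
    (hu : IsBouncingSolution α p u) {t₁ w : ℝ} (hz : u t₁ = 0) {F : Filter ℝ}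
    (hF : F ≤ 𝓝 t₁) (hw : Tendsto (deriv u) F (𝓝 w)) (c : ℝ) :
    Tendsto (En α c u) F (𝓝 (w^2/2)) := by
  have hα1' : (0:ℝ) < 1 - α := by linarith
  have hu0 : Tendsto u F (𝓝 0) := by
    rw [← hz]
    exact (hu.1.continuousAt).mono_left hF
  have hVa : ContinuousAt (Va α c) 0 := by
    have hrc : ContinuousAt (fun x : ℝ => x ^ (1-α:ℝ)) 0 :=
      Real.continuousAt_rpow_const 0 _ (Or.inr hα1'.le)
    exact ((hrc.neg.div_const (1-α)).add ((continuous_const.mul continuous_id).continuousAt))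
  have h2 : Tendsto (fun t => Va α c (u t)) F (𝓝 (Va α c 0)) := hVa.tendsto.comp hu0
  have hVa0 : Va α c 0 = 0 := by
    unfold Va
    rw [Real.zero_rpow (by linarith : (1-α:ℝ) ≠ 0)]
    ring
  rw [hVa0] at h2
  have h1 : Tendsto (fun t => (deriv u t)^2/2) F (𝓝 (w^2/2)) :=
    ((hw.pow 2).div_const 2)
  have := h1.add h2
  rw [add_zero] at this
  exact this

set_option maxHeartbeats 1000000 in
lemma phase1 {α p₁ p₂ : ℝ} {p u : ℝ → ℝ} (hα : 0 < α) (hα1 : α < 1)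
    (hp : ∀ t, p₂ ≤ p t ∧ p t ≤ p₁) (hp1 : p₁ < 0) (hp2 : p₂ ≤ p₁)
    (hu : IsBouncingSolution α p u) {t₀ v₀ : ℝ} (hz : u t₀ = 0)
    (hv : Tendsto (deriv u) (𝓝[>] t₀) (𝓝 v₀)) (hv₀ : 0 < v₀)
    (hbig : 2 * (-p₂) * Th α (-p₁) ≤ v₀^2) :
    ∃ τ, t₀ < τ ∧ u τ ≠ 0 ∧ deriv u τ = 0 ∧ v₀^2/2 ≤ Va α (-p₂) (u τ) := by
  have hcont := hu.1
  have hnn := hu.2.1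
  have hiso := hu.2.2.1
  have hode := hu.2.2.2.1
  have ha : (0:ℝ) < -p₁ := by linarith
  have hb : (0:ℝ) < -p₂ := by linarith
  have hH₁pos : 0 < Hc α (-p₁/2) := Hc_pos (by linarith)
  have hH₀pos : 0 < Hc α ((1-α)*(-p₁)/2) := Hc_pos (by nlinarith)
  have hA2 : (0:ℝ) < 2/(-p₁) := by positivity
  have hThdef : Th α (-p₁) = Hc α ((1-α)*(-p₁)/2) + 2 * Hc α (-p₁/2) + 2/(-p₁) + 1 := rfl
  have hupos : ∀ t, u t ≠ 0 → 0 < u t := fun t h => lt_of_le_of_ne (hnn t) (Ne.symm h)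
  have hdu : ∀ t, u t ≠ 0 → HasDerivAt u (deriv u t) t := fun t h => (hode t h).1.hasDerivAt
  have hddu : ∀ t, u t ≠ 0 → HasDerivAt (deriv u) ((u t) ^ (-α) + p t) t :=
    fun t h => (hode t h).2
  have hducont : ∀ t, u t ≠ 0 → ContinuousAt (deriv u) t :=
    fun t h => (hode t h).2.differentiableAt.continuousAt
  -- window after t₀
  have h1a : ∃ m, t₀ < m ∧ ∀ t ∈ Ioc t₀ m, u t ≠ 0 ∧ 0 < deriv u t := by
    have e1 : ∀ᶠ s in 𝓝[>] t₀, u s ≠ 0 :=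
      (hiso t₀ hz).filter_mono (nhdsWithin_mono t₀ (fun x hx => ne_of_gt hx))
    have e2 : ∀ᶠ s in 𝓝[>] t₀, 0 < deriv u s := hv.eventually (eventually_gt_nhds hv₀)
    obtain ⟨m, hm, hsub⟩ := mem_nhdsGT_iff_exists_Ioc_subset.mp (e1.and e2)
    exact ⟨m, hm, fun t ht => hsub ht⟩
  set S : Set ℝ := {t | t₀ < t ∧ (u t = 0 ∨ deriv u t ≤ 0)} with hSdef
  have hSne : S.Nonempty := by
    by_contra hemp
    rw [Set.not_nonempty_iff_eq_empty, Set.eq_empty_iff_forall_notMem] at hemp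
    have hall : ∀ t, t₀ < t → u t ≠ 0 ∧ 0 < deriv u t := by
      intro t ht
      have h1 : ¬(u t = 0 ∨ deriv u t ≤ 0) := fun h => hemp t ⟨ht, h⟩
      push_neg at h1
      exact h1
    have humono : ∀ s e, t₀ < s → s ≤ e → u s ≤ u e := by
      intro s e hs hse
      apply my_mono (f := u) (f' := deriv u) hse
      · intro t ht; exact hdu t (hall t (lt_of_lt_of_le hs ht.1)).1
      · intro t ht; exact (hall t (hs.trans ht.1)).2.le
    have hE2 : ∀ t, t₀ < t → v₀^2/2 ≤ En α (-p₂) u t := by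
      intro t ht
      have hlim : Tendsto (En α (-p₂) u) (𝓝[>] t₀) (𝓝 (v₀^2/2)) :=
        En_tendsto hα1 hu hz nhdsWithin_le_nhds hv _
      apply le_of_tendsto hlim
      filter_upwards [Ioo_mem_nhdsGT ht] with x hx
      apply my_mono (f := En α (-p₂) u) (f' := fun r => deriv u r * (p r + -p₂)) hx.2.le
      · intro r hr; exact hasDerivAt_En hα1 hu _ (hall r (hx.1.trans_le hr.1)).1
      · intro r hr
        have h1 := (hall r (hx.1.trans hr.1)).2
        have h2 := (hp r).1
        nlinarith
    by_cases hcase : ∃ s, t₀ < s ∧ Hc α (-p₁/2) ≤ u s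
    · obtain ⟨s, hs, hHs⟩ := hcase
      have hdus : 0 < deriv u s := (hall s hs).2
      set x := s + 2/(-p₁) * (deriv u s) + 1 with hxdef
      have hprod : 0 < 2/(-p₁) * deriv u s := mul_pos hA2 hdus
      have hsx : s ≤ x := by rw [hxdef]; linarith
      have hanti : deriv u x + (-p₁)/2 * x ≤ deriv u s + (-p₁)/2 * s := by
        apply my_anti (f := fun r => deriv u r + (-p₁)/2 * r)
          (f' := fun r => ((u r)^(-α) + p r) + (-p₁)/2) hsx
        · intro t ht
          have h1 : u t ≠ 0 := (hall t (hs.trans_le ht.1)).1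
          have h2 := (hddu t h1).add ((hasDerivAt_id t).const_mul ((-p₁)/2))
          refine h2.congr_deriv ?_
          ring
        · intro t ht
          have h1 : Hc α (-p₁/2) ≤ u t := le_trans hHs (humono s t hs ht.1.le)
          have h2 : u t ^ (-α:ℝ) ≤ -p₁/2 := by
            have h3 := rpow_neg_anti hα hH₁pos h1
            rwa [Hc_rpow hα (by linarith)] at h3
          have h4 := (hp t).2
          show ((u t)^(-α) + p t) + (-p₁)/2 ≤ 0
          linarith
      have hdux : 0 < deriv u x := (hall x (hs.trans_le hsx)).2
      have hxs : (-p₁)/2 * x - (-p₁)/2 * s = deriv u s + (-p₁)/2 := by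
        rw [hxdef]
        field_simp [show p₁ ≠ 0 by linarith]
        ring
      linarith
    · push_neg at hcase
      have hc₁ : 0 < v₀^2/2 - (-p₂) * Hc α (-p₁/2) := by nlinarith
      set c₂ := Real.sqrt (2*(v₀^2/2 - (-p₂) * Hc α (-p₁/2))) with hc₂def
      have hc₂pos : 0 < c₂ := Real.sqrt_pos.mpr (by linarith)
      have hdub : ∀ t, t₀ < t → c₂ ≤ deriv u t := by
        intro t ht
        have h1 := hE2 t ht
        have h2 : Va α (-p₂) (u t) ≤ (-p₂) * u t := Va_le hα1 (hnn t)
        have h3 : u t < Hc α (-p₁/2) := hcase t ht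
        have hEdef : En α (-p₂) u t = (deriv u t)^2/2 + Va α (-p₂) (u t) := rfl
        rw [hEdef] at h1
        have h4 : v₀^2/2 - (-p₂) * Hc α (-p₁/2) ≤ (deriv u t)^2/2 := by nlinarith [hnn t, hb]
        have h5 : c₂^2 ≤ (deriv u t)^2 := by
          rw [hc₂def, Real.sq_sqrt (by linarith)]
          linarith
        have h6 := (hall t ht).2
        nlinarith
      have h7 : 0 ≤ Hc α (-p₁/2)/c₂ := div_nonneg hH₁pos.le hc₂pos.le
      obtain ⟨s, e, hs, hse, hkey⟩ : ∃ s e, t₀ < s ∧ s ≤ e ∧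
          c₂ * (e - s) = Hc α (-p₁/2) := by
        refine ⟨t₀+1, t₀+1 + Hc α (-p₁/2)/c₂, by linarith, by linarith, ?_⟩
        have h0 : t₀+1 + Hc α (-p₁/2)/c₂ - (t₀+1) = Hc α (-p₁/2)/c₂ := by ring
        rw [h0, mul_comm, div_mul_cancel₀ _ hc₂pos.ne']
      have hgrow : u s - c₂ * s ≤ u e - c₂ * e := by
        apply my_mono (f := fun r => u r - c₂ * r) (f' := fun r => deriv u r - c₂) hse
        · intro r hr
          have hr1 : t₀ < r := lt_of_lt_of_le hs hr.1
          have h1 : u r ≠ 0 := (hall r hr1).1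
          have h2 := (hdu r h1).sub ((hasDerivAt_id r).const_mul c₂)
          refine h2.congr_deriv ?_
          ring
        · intro r hr
          have hr1 : t₀ < r := hs.trans hr.1
          have := hdub r hr1
          show deriv u r - c₂ ≥ 0
          linarith
      have h9 : 0 < u s := hupos s (hall s hs).1
      have h8' : c₂ * e - c₂ * s = Hc α (-p₁/2) := by rw [← hkey]; ring
      have h10 : Hc α (-p₁/2) ≤ u e := by linarith
      exact absurd h10 (not_le.mpr (hcase e (hs.trans_le hse)))
  have hbdd : BddBelow S := ⟨t₀, fun x hx => hx.1.le⟩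
  obtain ⟨m, hm, hgood⟩ := h1a
  have hmlb : ∀ x ∈ S, m ≤ x := by
    intro x hxS
    by_contra hmx
    push_neg at hmx
    have h1 := hgood x ⟨hxS.1, hmx.le⟩
    rcases hxS.2 with h|h
    · exact h1.1 h
    · linarith [h1.2]
  set τ := sInf S with hτdef
  have hτm : m ≤ τ := le_csInf hSne hmlb
  have hτ0 : t₀ < τ := lt_of_lt_of_le hm hτm
  have hint : ∀ t, t₀ < t → t < τ → u t ≠ 0 ∧ 0 < deriv u t := by
    intro t h1 h2
    have h3 : t ∉ S := notMem_of_lt_csInf h2 hbdd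
    have h4 : ¬(u t = 0 ∨ deriv u t ≤ 0) := fun h => h3 ⟨h1, h⟩
    push_neg at h4
    exact h4
  have hτne : u τ ≠ 0 := by
    intro h0
    set s₀ := (t₀ + τ)/2 with hs₀def
    have hs₀1 : t₀ < s₀ := by rw [hs₀def]; linarith
    have hs₀2 : s₀ < τ := by rw [hs₀def]; linarith
    have hposs : 0 < u s₀ := hupos s₀ (hint s₀ hs₀1 hs₀2).1
    have hlim : Tendsto u (𝓝[<] τ) (𝓝 0) := by
      rw [← h0]; exact hcont.continuousAt.mono_left nhdsWithin_le_nhds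
    have hev : ∀ᶠ x in 𝓝[<] τ, u s₀ ≤ u x := by
      filter_upwards [Ioo_mem_nhdsLT hs₀2] with x hx
      apply my_mono (f := u) (f' := deriv u) hx.1.le
      · intro r hr
        exact hdu r (hint r (lt_of_lt_of_le hs₀1 hr.1) (lt_of_le_of_lt hr.2 hx.2)).1
      · intro r hr
        exact (hint r (hs₀1.trans hr.1) (hr.2.trans hx.2)).2.le
    have := ge_of_tendsto hlim hev
    linarith
  have hτcl : τ ∈ closure S := csInf_mem_closure hSne hbdd
  have hd1 : deriv u τ ≤ 0 := by
    by_contra hpos'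
    push_neg at hpos'
    have hev : {x | u x ≠ 0 ∧ 0 < deriv u x} ∈ 𝓝 τ := by
      have e1 : ∀ᶠ x in 𝓝 τ, u x ≠ 0 := hcont.continuousAt.eventually_ne hτne
      have e2 : ∀ᶠ x in 𝓝 τ, 0 < deriv u x :=
        (hducont τ hτne).eventually (eventually_gt_nhds hpos')
      exact e1.and e2
    obtain ⟨x, hxF, hxS⟩ := mem_closure_iff_nhds.mp hτcl _ hev
    rcases hxS.2 with h|h
    · exact hxF.1 h
    · linarith [hxF.2]
  have hd2 : 0 ≤ deriv u τ := by
    have hlim : Tendsto (deriv u) (𝓝[<] τ) (𝓝 (deriv u τ)) :=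
      (hducont τ hτne).mono_left nhdsWithin_le_nhds
    apply ge_of_tendsto hlim
    filter_upwards [Ioo_mem_nhdsLT hτ0] with x hx
    exact (hint x hx.1 hx.2).2.le
  have hdτ : deriv u τ = 0 := le_antisymm hd1 hd2
  refine ⟨τ, hτ0, hτne, hdτ, ?_⟩
  have hlim : Tendsto (En α (-p₂) u) (𝓝[>] t₀) (𝓝 (v₀^2/2)) :=
    En_tendsto hα1 hu hz nhdsWithin_le_nhds hv _
  have hEτ : v₀^2/2 ≤ En α (-p₂) u τ := by
    apply le_of_tendsto hlim
    filter_upwards [Ioo_mem_nhdsGT hτ0] with x hx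
    apply my_mono (f := En α (-p₂) u) (f' := fun r => deriv u r * (p r + -p₂)) hx.2.le
    · intro r hr
      rcases eq_or_lt_of_le hr.2 with he|hl
      · exact he ▸ hasDerivAt_En hα1 hu _ (he ▸ hτne)
      · exact hasDerivAt_En hα1 hu _ (hint r (hx.1.trans_le hr.1) hl).1
    · intro r hr
      have h1 := (hint r (hx.1.trans hr.1) hr.2).2
      have h2 := (hp r).1
      nlinarith
  have hfin : En α (-p₂) u τ = Va α (-p₂) (u τ) := by
    have : En α (-p₂) u τ = (deriv u τ)^2/2 + Va α (-p₂) (u τ) := rfl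
    rw [this, hdτ]
    ring
  linarith [hfin ▸ hEτ]

set_option maxHeartbeats 1000000 in
lemma phase2 {α p₁ p₂ : ℝ} {p u : ℝ → ℝ} (hα : 0 < α) (hα1 : α < 1)
    (hp : ∀ t, p₂ ≤ p t ∧ p t ≤ p₁) (hp1 : p₁ < 0) (hp2 : p₂ ≤ p₁)
    (hu : IsBouncingSolution α p u) {τ : ℝ} (hτ : u τ ≠ 0) (hdτ : deriv u τ = 0)
    (hh : Th α (-p₁) ≤ u τ) :
    ∃ T v, τ < T ∧ u T = 0 ∧ 0 < v ∧ (-p₁) * (u τ) ≤ v^2 ∧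
      Tendsto (deriv u) (𝓝[>] T) (𝓝 v) := by
  have hcont := hu.1
  have hnn := hu.2.1
  have hiso := hu.2.2.1
  have hode := hu.2.2.2.1
  have hel := hu.2.2.2.2
  have ha : (0:ℝ) < -p₁ := by linarith
  have hb : (0:ℝ) < -p₂ := by linarith
  have hH₁pos : 0 < Hc α (-p₁/2) := Hc_pos (by linarith)
  have hH₀pos : 0 < Hc α ((1-α)*(-p₁)/2) := Hc_pos (by nlinarith)
  have hA2 : (0:ℝ) < 2/(-p₁) := by positivity
  have hA4 : (0:ℝ) < 4/(-p₁) := by positivity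
  have hThdef : Th α (-p₁) = Hc α ((1-α)*(-p₁)/2) + 2 * Hc α (-p₁/2) + 2/(-p₁) + 1 := rfl
  rw [hThdef] at hh
  have hp1ne : (2:ℝ) * p₁ ≠ 0 := by
    have : (2:ℝ)*p₁ < 0 := by linarith
    exact this.ne
  have h2a1 : (-p₁)/2 * (2/(-p₁)) = 1 := by
    field_simp
    exact mul_inv_cancel₀ (by linarith)
  have hmul : (-p₁)/2 * (Hc α ((1-α)*(-p₁)/2) + 2 * Hc α (-p₁/2) + 2/(-p₁) + 1)
      ≤ (-p₁)/2 * u τ := mul_le_mul_of_nonneg_left hh (by positivity)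
  have hq : (-p₁) * Hc α (-p₁/2) + 1 ≤ (-p₁)/2 * u τ := by
    nlinarith [hmul, h2a1, mul_nonneg (by positivity : (0:ℝ) ≤ (-p₁)/2) hH₀pos.le, ha]
  have hupos : ∀ t, u t ≠ 0 → 0 < u t := fun t h => lt_of_le_of_ne (hnn t) (Ne.symm h)
  have hdu : ∀ t, u t ≠ 0 → HasDerivAt u (deriv u t) t := fun t h => (hode t h).1.hasDerivAt
  have hddu : ∀ t, u t ≠ 0 → HasDerivAt (deriv u) ((u t) ^ (-α) + p t) t :=
    fun t h => (hode t h).2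
  have hducont : ∀ t, u t ≠ 0 → ContinuousAt (deriv u) t :=
    fun t h => (hode t h).2.differentiableAt.continuousAt
  have hhpos : 0 < u τ := hupos τ hτ
  have hhH0 : Hc α ((1-α)*(-p₁)/2) ≤ u τ := by linarith [hH₁pos, hA2]
  have hhH1 : Hc α (-p₁/2) ≤ u τ := by linarith [hH₀pos, hA2]
  have hVal : (-p₁)/2 * (u τ) ≤ Va α (-p₁) (u τ) := Va_lower hα hα1 ha hhH0
  have hEτ : En α (-p₁) u τ = Va α (-p₁) (u τ) := by
    have h0 : En α (-p₁) u τ = (deriv u τ)^2/2 + Va α (-p₁) (u τ) := rfl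
    rw [h0, hdτ]; ring
  -- second derivative bound whenever `u ≥ H₁`
  have hsec : ∀ t, Hc α (-p₁/2) ≤ u t → (u t)^(-α:ℝ) + p t ≤ -((-p₁)/2) := by
    intro t h1
    have h2 : u t ^ (-α:ℝ) ≤ -p₁/2 := by
      have h3 := rpow_neg_anti hα hH₁pos h1
      rwa [Hc_rpow hα (by linarith)] at h3
    have h4 := (hp t).2
    linarith
  -- small window to the right of τ
  have h2a : ∃ m, τ < m ∧ ∀ t ∈ Ioc τ m, u t ≠ 0 ∧ deriv u t < 0 := by
    have e1 : ∀ᶠ x in 𝓝[>] τ, u x ≠ 0 :=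
      (hcont.continuousAt.eventually_ne hτ).filter_mono nhdsWithin_le_nhds
    have hc3 : (u τ)^(-α:ℝ) + p τ < 0 := by
      have := hsec τ hhH1
      linarith
    have e2 : ∀ᶠ x in 𝓝[>] τ, deriv u x < 0 := by
      have hslope := hasDerivAt_iff_tendsto_slope.mp (hddu τ hτ)
      have hslope' : Tendsto (slope (deriv u) τ) (𝓝[>] τ) (𝓝 ((u τ)^(-α)+p τ)) :=
        hslope.mono_left (nhdsWithin_mono τ (fun x hx => ne_of_gt hx))
      have e3 : ∀ᶠ x in 𝓝[>] τ, slope (deriv u) τ x < 0 :=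
        hslope'.eventually (eventually_lt_nhds hc3)
      filter_upwards [e3, self_mem_nhdsWithin] with x hx1 hx2
      have hxτ : (0:ℝ) < x - τ := sub_pos.mpr hx2
      rw [slope_def_field, hdτ, sub_zero] at hx1
      rcases div_neg_iff.mp hx1 with ⟨h5, h6⟩ | ⟨h5, h6⟩
      · linarith
      · exact h5
    obtain ⟨m, hm, hsub⟩ := mem_nhdsGT_iff_exists_Ioc_subset.mp (e1.and e2)
    exact ⟨m, hm, fun t ht => hsub ht⟩
  set S : Set ℝ := {t | τ < t ∧ (u t = 0 ∨ 0 ≤ deriv u t)} with hSdef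
  have hSne : S.Nonempty := by
    by_contra hemp
    rw [Set.not_nonempty_iff_eq_empty, Set.eq_empty_iff_forall_notMem] at hemp
    have hall : ∀ t, τ < t → u t ≠ 0 ∧ deriv u t < 0 := by
      intro t ht
      have h1 : ¬(u t = 0 ∨ 0 ≤ deriv u t) := fun h => hemp t ⟨ht, h⟩
      push_neg at h1
      exact h1
    have huanti : ∀ s e, τ < s → s ≤ e → u e ≤ u s := by
      intro s e hs hse
      apply my_anti (f := u) (f' := deriv u) hse
      · intro t ht; exact hdu t (hall t (lt_of_lt_of_le hs ht.1)).1
      · intro t ht; exact (hall t (hs.trans ht.1)).2.le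
    have hE1 : ∀ t, τ < t → Va α (-p₁) (u τ) ≤ En α (-p₁) u t := by
      intro t ht
      rw [← hEτ]
      apply my_mono (f := En α (-p₁) u) (f' := fun r => deriv u r * (p r + -p₁)) ht.le
      · intro r hr
        rcases eq_or_lt_of_le hr.1 with he|hl
        · exact hasDerivAt_En hα1 hu _ (he ▸ hτ)
        · exact hasDerivAt_En hα1 hu _ (hall r hl).1
      · intro r hr
        have h1 := (hall r hr.1).2
        have h2 := (hp r).2
        nlinarith
    -- a point where the velocity is at most -1, after which u must go negative
    have hslide : ∀ s, τ < s → (∀ e, s ≤ e → deriv u e ≤ -1) → False := by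
      intro s hs hvel
      have hse : s ≤ s + (u s + 1) := by linarith [hnn s]
      have hanti2 : u (s + (u s + 1)) + (s + (u s + 1)) ≤ u s + s := by
        apply my_anti (f := fun r => u r + r) (f' := fun r => deriv u r + 1) hse
        · intro r hr
          have h1 : u r ≠ 0 := (hall r (hs.trans_le hr.1)).1
          exact (hdu r h1).add (hasDerivAt_id r)
        · intro r hr
          have := hvel r hr.1.le
          show deriv u r + 1 ≤ 0
          linarith
      linarith [hnn (s + (u s + 1))]
    by_cases hcase : ∃ s, τ < s ∧ u s < Hc α (-p₁/2)
    · obtain ⟨s, hs, hus⟩ := hcase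
      apply hslide s hs
      intro e he
      have he1 : τ < e := hs.trans_le he
      have h1 := hE1 e he1
      have hue : u e ≤ u s := huanti s e hs he
      have hVae : Va α (-p₁) (u e) ≤ (-p₁) * (u e) := Va_le hα1 (hnn e)
      have hEdef : En α (-p₁) u e = (deriv u e)^2/2 + Va α (-p₁) (u e) := rfl
      rw [hEdef] at h1
      have hmul2 : (-p₁) * (u e) ≤ (-p₁) * Hc α (-p₁/2) :=
        mul_le_mul_of_nonneg_left (le_of_lt (lt_of_le_of_lt hue hus)) ha.le
      have h2 : (1:ℝ) ≤ (deriv u e)^2/2 := by linarith [h1, hVal, hVae, hmul2, hq]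
      have h3 := (hall e he1).2
      nlinarith
    · push_neg at hcase
      apply hslide (τ + 1 + 4/(-p₁)) (by linarith [hA4])
      intro e he
      have hanti3 : deriv u e + (-p₁)/2 * e ≤ deriv u (τ+1) + (-p₁)/2 * (τ+1) := by
        apply my_anti (f := fun r => deriv u r + (-p₁)/2 * r)
          (f' := fun r => ((u r)^(-α) + p r) + (-p₁)/2) (by linarith [hA4] : τ + 1 ≤ e)
        · intro t ht
          have h1 : u t ≠ 0 := (hall t (by linarith [ht.1, hA4])).1
          have h2 := (hddu t h1).add ((hasDerivAt_id t).const_mul ((-p₁)/2))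
          refine h2.congr_deriv ?_
          ring
        · intro t ht
          have h1 : Hc α (-p₁/2) ≤ u t := hcase t (by linarith [ht.1, hA4])
          have := hsec t h1
          show ((u t)^(-α) + p t) + (-p₁)/2 ≤ 0
          linarith
      have hds : deriv u (τ+1) < 0 := (hall (τ+1) (by linarith)).2
      have hkey : (-p₁)/2 * e - (-p₁)/2 * (τ+1) ≥ 2 := by
        have h0 : (-p₁)/2 * (4/(-p₁)) = 2 := by
          field_simp
          rw [mul_div_cancel_left₀ _ (show p₁ ≠ 0 by linarith)]; norm_num
        nlinarith [ha, h0, mul_le_mul_of_nonneg_left he (by positivity : (0:ℝ) ≤ (-p₁)/2)]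
      linarith
  have hbdd : BddBelow S := ⟨τ, fun x hx => hx.1.le⟩
  obtain ⟨m, hm, hgood⟩ := h2a
  have hmlb : ∀ x ∈ S, m ≤ x := by
    intro x hxS
    by_contra hmx
    push_neg at hmx
    have h1 := hgood x ⟨hxS.1, hmx.le⟩
    rcases hxS.2 with h|h
    · exact h1.1 h
    · linarith [h1.2]
  set T := sInf S with hTdef
  have hTm : m ≤ T := le_csInf hSne hmlb
  have hT0 : τ < T := lt_of_lt_of_le hm hTm
  have hint : ∀ t, τ < t → t < T → u t ≠ 0 ∧ deriv u t < 0 := by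
    intro t h1 h2
    have h3 : t ∉ S := notMem_of_lt_csInf h2 hbdd
    have h4 : ¬(u t = 0 ∨ 0 ≤ deriv u t) := fun h => h3 ⟨h1, h⟩
    push_neg at h4
    exact h4
  have hTcl : T ∈ closure S := csInf_mem_closure hSne hbdd
  -- Energy at times in (τ, T)
  have hE1T : ∀ t, τ < t → t ≤ T → (∀ r ∈ Icc τ t, u r ≠ 0) →
      Va α (-p₁) (u τ) ≤ En α (-p₁) u t := by
    intro t ht htT hne
    rw [← hEτ]
    apply my_mono (f := En α (-p₁) u) (f' := fun r => deriv u r * (p r + -p₁)) ht.le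
    · intro r hr
      exact hasDerivAt_En hα1 hu _ (hne r hr)
    · intro r hr
      have h1 := (hint r hr.1 (lt_of_lt_of_le hr.2 htT)).2
      have h2 := (hp r).2
      nlinarith
  -- the main claim: u T = 0
  have hzero : u T = 0 := by
    by_contra hTne
    -- deriv u T = 0
    have hd1 : 0 ≤ deriv u T := by
      by_contra hpos'
      push_neg at hpos'
      have hev : {x | u x ≠ 0 ∧ deriv u x < 0} ∈ 𝓝 T := by
        have e1 : ∀ᶠ x in 𝓝 T, u x ≠ 0 := hcont.continuousAt.eventually_ne hTne
        have e2 : ∀ᶠ x in 𝓝 T, deriv u x < 0 :=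
          (hducont T hTne).eventually (eventually_lt_nhds hpos')
        exact e1.and e2
      obtain ⟨x, hxF, hxS⟩ := mem_closure_iff_nhds.mp hTcl _ hev
      rcases hxS.2 with h|h
      · exact hxF.1 h
      · linarith [hxF.2]
    have hd2 : deriv u T ≤ 0 := by
      have hlim : Tendsto (deriv u) (𝓝[<] T) (𝓝 (deriv u T)) :=
        (hducont T hTne).mono_left nhdsWithin_le_nhds
      apply le_of_tendsto hlim
      filter_upwards [Ioo_mem_nhdsLT hT0] with x hx
      exact (hint x hx.1 hx.2).2.le
    have hdT : deriv u T = 0 := le_antisymm hd2 hd1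
    -- u on [τ, T] is nonzero
    have hne : ∀ r ∈ Icc τ T, u r ≠ 0 := by
      intro r hr
      rcases eq_or_lt_of_le hr.1 with he|h1
      · exact he ▸ hτ
      · rcases eq_or_lt_of_le hr.2 with he2|h2
        · exact he2 ▸ hTne
        · exact (hint r h1 h2).1
    -- strict decrease of u on [τ, T]
    have hdec : u T < u τ := by
      apply my_strictAnti (f := u) (f' := deriv u) hT0
      · intro r hr; exact hdu r (hne r hr)
      · intro r hr; exact (hint r hr.1 hr.2).2
    have henergy := hE1T T hT0 le_rfl hne
    have hET : En α (-p₁) u T = Va α (-p₁) (u T) := by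
      have h0 : En α (-p₁) u T = (deriv u T)^2/2 + Va α (-p₁) (u T) := rfl
      rw [h0, hdT]; ring
    rw [hET] at henergy
    -- both u τ and u T are above η, so Va is strictly monotone between them
    have hVaτpos : 0 < Va α (-p₁) (u τ) := by nlinarith
    have hVaTpos : 0 < Va α (-p₁) (u T) := lt_of_lt_of_le hVaτpos henergy
    have hgtτ : Hc α ((1-α)*(-p₁)) < u τ := Va_pos_gt hα hα1 ha (hnn τ) hVaτpos
    have hgtT : Hc α ((1-α)*(-p₁)) < u T := Va_pos_gt hα hα1 ha (hnn T) hVaTpos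
    have := (Va_strictMono hα hα1 ha) (le_of_lt hgtT) (le_of_lt hgtτ) hdec
    linarith
  -- elastic bounce at T
  obtain ⟨v, hvr, hvl⟩ := hel T hzero
  have hvnonneg : 0 ≤ v := by
    have h1 : -v ≤ 0 := by
      apply le_of_tendsto hvl
      filter_upwards [Ioo_mem_nhdsLT hT0] with x hx
      exact (hint x hx.1 hx.2).2.le
    linarith
  have hElim : Tendsto (En α (-p₁) u) (𝓝[<] T) (𝓝 ((-v)^2/2)) :=
    En_tendsto hα1 hu hzero nhdsWithin_le_nhds hvl _
  have hEv : Va α (-p₁) (u τ) ≤ (-v)^2/2 := by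
    apply ge_of_tendsto hElim
    filter_upwards [Ioo_mem_nhdsLT hT0] with x hx
    apply hE1T x hx.1 hx.2.le
    intro r hr
    rcases eq_or_lt_of_le hr.1 with he|h1
    · exact he ▸ hτ
    · exact (hint r h1 (lt_of_le_of_lt hr.2 hx.2)).1
  have hv2 : (-p₁) * (u τ) ≤ v^2 := by nlinarith
  have hvpos : 0 < v := by
    rcases eq_or_lt_of_le hvnonneg with he|h
    · exfalso
      rw [← he] at hv2
      nlinarith
    · exact h
  exact ⟨T, v, hT0, hzero, hvpos, hv2, hvr⟩

lemma bounce {α p₁ p₂ : ℝ} {p u : ℝ → ℝ} (hα : 0 < α) (hα1 : α < 1)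
    (hp : ∀ t, p₂ ≤ p t ∧ p t ≤ p₁) (hp1 : p₁ < 0)
    (hu : IsBouncingSolution α p u) {t₀ v₀ : ℝ} (hz : u t₀ = 0)
    (hv : Tendsto (deriv u) (𝓝[>] t₀) (𝓝 v₀)) (hv₀ : 0 < v₀)
    (hbig : 2 * (-p₂) * Th α (-p₁) ≤ v₀^2) :
    ∃ T v, t₀ < T ∧ u T = 0 ∧ 0 < v ∧ (-p₁) * v₀^2 ≤ 2 * (-p₂) * v^2 ∧
      Tendsto (deriv u) (𝓝[>] T) (𝓝 v) := by
  have hp2 : p₂ ≤ p₁ := le_trans (hp 0).1 (hp 0).2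
  have ha : (0:ℝ) < -p₁ := by linarith
  have hb : (0:ℝ) < -p₂ := by linarith
  obtain ⟨τ, hτ0, hτne, hdτ, hE⟩ := phase1 hα hα1 hp hp1 hp2 hu hz hv hv₀ hbig
  have h1 : Va α (-p₂) (u τ) ≤ (-p₂) * u τ := Va_le hα1 (hu.2.1 τ)
  have hh : Th α (-p₁) ≤ u τ := by
    by_contra hcon
    push_neg at hcon
    nlinarith [mul_lt_mul_of_pos_left hcon hb]
  obtain ⟨T, v, hτT, hTz, hvpos, hv2, hvr⟩ := phase2 hα hα1 hp hp1 hp2 hu hτne hdτ hh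
  refine ⟨T, v, hτ0.trans hτT, hTz, hvpos, ?_, hvr⟩
  have h2 : (-p₂) * ((-p₁) * u τ) ≤ (-p₂) * v^2 := mul_le_mul_of_nonneg_left hv2 hb.le
  have h3 : v₀^2/2 ≤ (-p₂) * u τ := by linarith
  have h4 : (-p₁) * (v₀^2/2) ≤ (-p₁) * ((-p₂) * u τ) := mul_le_mul_of_nonneg_left h3 ha.le
  nlinarith [h2, h4]

set_option maxHeartbeats 1000000 in
lemma iterate {α p₁ p₂ : ℝ} {p : ℝ → ℝ} (hα : 0 < α) (hα1 : α < 1)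
    (hp : ∀ t, p₂ ≤ p t ∧ p t ≤ p₁) (hp1 : p₁ < 0)
    (C : ℝ) (hC0 : 0 < C) (hC : Real.sqrt (2 * (-p₂) * Th α (-p₁)) ≤ C) :
    ∀ n : ℕ, ∀ t₀ v₀ : ℝ, ∀ u : ℝ → ℝ, IsBouncingSolution α p u → u t₀ = 0 →
      Tendsto (deriv u) (𝓝[>] t₀) (𝓝 v₀) →
      C / (Real.sqrt ((-p₁)/(2*(-p₂))))^n < v₀ →
      ∃ s : Finset ℝ, s.card = n ∧ ∀ t ∈ s, t₀ < t ∧ u t = 0 := by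
  have hp2 : p₂ ≤ p₁ := le_trans (hp 0).1 (hp 0).2
  have ha : (0:ℝ) < -p₁ := by linarith
  have hb : (0:ℝ) < -p₂ := by linarith
  set κ := Real.sqrt ((-p₁)/(2*(-p₂))) with hκdef
  have hκpos : 0 < κ := Real.sqrt_pos.mpr (by positivity)
  have hκ2 : κ^2 = (-p₁)/(2*(-p₂)) := Real.sq_sqrt (by positivity)
  have hκlt1 : κ < 1 := by
    have h1 : (-p₁)/(2*(-p₂)) < 1 := by
      rw [div_lt_one (by positivity)]
      linarith
    nlinarith [hκpos]
  intro n
  induction n with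
  | zero =>
    intro t₀ v₀ u _ _ _ _
    exact ⟨∅, by simp, by simp⟩
  | succ n ih =>
    intro t₀ v₀ u huB hz hv hγ
    have hpow : 0 < κ^(n+1) := pow_pos hκpos _
    have hpown : 0 < κ^n := pow_pos hκpos _
    have hv₀pos : 0 < v₀ := lt_trans (div_pos hC0 hpow) hγ
    have hbig : 2*(-p₂)*Th α (-p₁) ≤ v₀^2 := by
      have h1 : C ≤ C/κ^(n+1) := by
        rw [le_div_iff₀ hpow]
        nlinarith [pow_le_one₀ hκpos.le hκlt1.le (n := n+1)]
      have h2 : Real.sqrt (2*(-p₂)*Th α (-p₁)) ≤ v₀ := le_trans hC (le_trans h1 hγ.le)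
      have h3 : Real.sqrt (2*(-p₂)*Th α (-p₁))^2 ≤ v₀^2 := by
        apply pow_le_pow_left₀ (Real.sqrt_nonneg _) h2
      rwa [Real.sq_sqrt (mul_nonneg (by linarith) (Th_pos hα hα1 ha).le)] at h3
    obtain ⟨T, v, hT, hTz, hvp, hineq, hvr⟩ := bounce hα hα1 hp hp1 huB hz hv hv₀pos hbig
    have hγ' : C / κ^n < v := by
      have h4 : κ^2 * v₀^2 ≤ v^2 := by
        rw [hκ2, div_mul_eq_mul_div, div_le_iff₀ (by positivity : (0:ℝ) < 2*(-p₂))]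
        nlinarith [hineq]
      have h6 : (C/κ^(n+1))^2 < v₀^2 :=
        pow_lt_pow_left₀ hγ (le_of_lt (div_pos hC0 hpow)) two_ne_zero
      have h5 : (C/κ^n)^2 < v^2 := by
        have he : (C/κ^n)^2 = κ^2 * (C/κ^(n+1))^2 := by
          field_simp
          ring
        rw [he]
        calc κ^2 * (C/κ^(n+1))^2 < κ^2 * v₀^2 :=
              mul_lt_mul_of_pos_left h6 (by positivity)
        _ ≤ v^2 := h4
      have h7 : 0 ≤ C/κ^n := le_of_lt (div_pos hC0 hpown)
      nlinarith [hvp, h5, h7]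
    obtain ⟨s, hcard, hmem⟩ := ih T v u huB hTz hvr hγ'
    refine ⟨insert T s, ?_, ?_⟩
    · rw [Finset.card_insert_of_notMem, hcard]
      intro hTs
      exact absurd (hmem T hTs).1 (lt_irrefl T)
    · intro t ht
      rcases Finset.mem_insert.mp ht with he|hs'
      · exact ⟨he ▸ hT, he ▸ hTz⟩
      · have h8 := hmem t hs'
        exact ⟨hT.trans h8.1, h8.2⟩

end S16

theorem stmt16 (α p₁ p₂ : ℝ) (hα : 0 < α) (hα1 : α < 1)
    (p : ℝ → ℝ) (K : NNReal) (hLip : LipschitzWith K p)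
    (hp : ∀ t : ℝ, p₂ ≤ p t ∧ p t ≤ p₁) (hp1 : p₁ < 0)
    (η : ℝ) (hη : η = ((α - 1) * p₁) ^ (-(1/α)) ) :
    ∃ γ : ℕ → ℝ, StrictMono γ ∧ Real.sqrt (2 * (p₁ - p₂) * η) < γ 1 ∧
      ∀ n : ℕ, 1 ≤ n → ∀ (t₀ v₀ : ℝ) (u : ℝ → ℝ),
        γ n < v₀ → IsBouncingSolution α p u → u t₀ = 0 →
        Tendsto (deriv u) (𝓝[>] t₀) (𝓝 v₀) →
        ∃ s : Finset ℝ, s.card = n ∧ ∀ t ∈ s, t₀ < t ∧ u t = 0 := by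
  have hp2 : p₂ ≤ p₁ := le_trans (hp 0).1 (hp 0).2
  have ha : (0:ℝ) < -p₁ := by linarith
  have hb : (0:ℝ) < -p₂ := by linarith
  set κ := Real.sqrt ((-p₁)/(2*(-p₂))) with hκdef
  have hκpos : 0 < κ := Real.sqrt_pos.mpr (by positivity)
  have hκlt1 : κ < 1 := by
    have h1 : (-p₁)/(2*(-p₂)) < 1 := by
      rw [div_lt_one (by positivity)]
      linarith
    nlinarith [hκpos, Real.sq_sqrt (show (0:ℝ) ≤ (-p₁)/(2*(-p₂)) by positivity)]
  set C := Real.sqrt (2*(-p₂)*S16.Th α (-p₁)) + Real.sqrt (2*(p₁-p₂)*η) + 1 with hCdef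
  have hs1 := Real.sqrt_nonneg (2*(-p₂)*S16.Th α (-p₁))
  have hs2 := Real.sqrt_nonneg (2*(p₁-p₂)*η)
  have hC0 : 0 < C := by rw [hCdef]; linarith
  refine ⟨fun n => C / κ^n, ?_, ?_, ?_⟩
  · intro m n hmn
    have h1 : κ^n < κ^m := pow_lt_pow_right_of_lt_one₀ hκpos hκlt1 hmn
    exact (div_lt_div_iff_of_pos_left hC0 (pow_pos hκpos m) (pow_pos hκpos n)).mpr h1
  · have h2 : C < C/κ^1 := by
      rw [pow_one, lt_div_iff₀ hκpos]
      nlinarith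
    have h3 : Real.sqrt (2*(p₁-p₂)*η) < C := by rw [hCdef]; linarith
    show Real.sqrt (2 * (p₁ - p₂) * η) < C / κ^1
    linarith
  · intro n hn t₀ v₀ u hγ huB hz hv
    have hC : Real.sqrt (2 * (-p₂) * S16.Th α (-p₁)) ≤ C := by
      rw [hCdef]; linarith
    have hγ' : C / (Real.sqrt ((-p₁)/(2*(-p₂))))^n < v₀ := by
      rw [← hκdef]; exact hγ
    exact S16.iterate hα hα1 hp hp1 C hC0 hC n t₀ v₀ u huB hz hv hγ'
end

section
/- Consider the sequence of translated equations ü = (u+εₙ)^{-α} + p(t) with εₙ ↓ 0. If u is the solution of ü = u^{-α} + p(t) with u(0) = u₀ > η, u̇(0) = 0, and maximal interval (t₀, t₁), and uₙ(t) = u(t) - εₙ are the translated solutions vanishing at times t₀ₙ, t₁ₙ with t₀ < t₀ₙ < 0 < t₁ₙ < t₁, then t₀ₙ → t₀ and t₁ₙ → t₁ as n → ∞, and the truncated functions wₙ (equal to uₙ on (t₀ₙ, t₁ₙ), zero elsewhere on (t₀,t₁)) converge uniformly to u on (t₀,t₁), with ẇₙ → u̇ uniformly on compact subsets of (t₀,t₁)∖{t₀ₙ,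 t₁ₙ}. -/
open Real Filter Set Topology

theorem stmt19 (α p₁ p₂ u₀ η t₀ t₁ : ℝ) (hα : 0 < α) (hα1 : α < 1)
    (p : ℝ → ℝ) (hpcont : Continuous p)
    (hp : ∀ t : ℝ, p₂ ≤ p t ∧ p t ≤ p₁) (hp1 : p₁ < 0)
    (hη : η = ((α - 1) * p₁) ^ (-(1/α))) (hu₀ : η < u₀)
    (ht₀ : t₀ < 0) (ht₁ : 0 < t₁)
    (u u' : ℝ → ℝ)
    (hsol : ∀ t ∈ Set.Ioo t₀ t₁,
      0 < u t ∧ HasDerivAt u (u' t) t ∧ HasDerivAt u' ((u t) ^ (-α) + p t) t)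
    (hinit : u 0 = u₀) (hvel : u' 0 = 0)
    (hcol0 : Tendsto u (𝓝[>] t₀) (𝓝 0)) (hcol1 : Tendsto u (𝓝[<] t₁) (𝓝 0))
    (ε : ℕ → ℝ) (hεpos : ∀ n, 0 < ε n) (hεanti : StrictAnti ε)
    (hεlim : Tendsto ε atTop (𝓝 0))
    (t₀n t₁n : ℕ → ℝ)
    (ht₀n : ∀ n, t₀ < t₀n n ∧ t₀n n < 0 ∧ u (t₀n n) = ε n)
    (ht₁n : ∀ n, 0 < t₁n n ∧ t₁n n < t₁ ∧ u (t₁n n) = ε n)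
    (hpos : ∀ n, ∀ t ∈ Set.Ioo (t₀n n) (t₁n n), ε n < u t)
    (w : ℕ → ℝ → ℝ)
    (hw : ∀ n t, w n t = if t ∈ Set.Ioo (t₀n n) (t₁n n) then u t - ε n else 0) :
    Tendsto t₀n atTop (𝓝 t₀) ∧ Tendsto t₁n atTop (𝓝 t₁) ∧
    TendstoUniformlyOn (fun n => w n) u atTop (Set.Ioo t₀ t₁) ∧
    (∀ K : Set ℝ, IsCompact K → K ⊆ Set.Ioo t₀ t₁ →
      TendstoUniformlyOn (fun n => deriv (w n)) u' atTop K) := by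

  have hcont : ∀ t ∈ Set.Ioo t₀ t₁, ContinuousAt u t := fun t ht => (hsol t ht).2.1.continuousAt
  -- t₀n → t₀
  have hT0 : Tendsto t₀n atTop (𝓝 t₀) := by
    rw [Metric.tendsto_atTop]
    intro ε' hε'
    set δ := min ε' (-t₀) with hδdef
    have hδ0 : 0 < δ := lt_min hε' (by linarith)
    have hδle : δ ≤ -t₀ := min_le_right _ _
    have hsub : Set.Icc (t₀ + δ) 0 ⊆ Set.Ioo t₀ t₁ := fun x hx =>
      ⟨by linarith [hx.1], lt_of_le_of_lt hx.2 ht₁⟩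
    have hne : (Set.Icc (t₀ + δ) 0).Nonempty := ⟨0, by constructor <;> [linarith; rfl]⟩
    obtain ⟨x₀, hx₀K, hmin⟩ := isCompact_Icc.exists_isMinOn hne
      (fun x hx => (hcont x (hsub hx)).continuousWithinAt)
    have hm : 0 < u x₀ := (hsol x₀ (hsub hx₀K)).1
    have hev : ∀ᶠ n in atTop, ε n < u x₀ := hεlim.eventually_lt_const hm
    obtain ⟨N, hN⟩ := eventually_atTop.mp hev
    refine ⟨N, fun n hn => ?_⟩
    obtain ⟨h1, h2, h3⟩ := ht₀n n
    have : t₀n n < t₀ + δ := by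
      by_contra hcon
      push_neg at hcon
      have := isMinOn_iff.mp hmin (t₀n n) ⟨hcon, le_of_lt h2⟩
      rw [h3] at this
      exact absurd (hN n hn) (not_lt.mpr this)
    rw [Real.dist_eq, abs_lt]
    constructor <;> [linarith; linarith [min_le_left ε' (-t₀)]]
  -- t₁n → t₁
  have hT1 : Tendsto t₁n atTop (𝓝 t₁) := by
    rw [Metric.tendsto_atTop]
    intro ε' hε'
    set δ := min ε' t₁ with hδdef
    have hδ0 : 0 < δ := lt_min hε' ht₁
    have hδle : δ ≤ t₁ := min_le_right _ _
    have hsub : Set.Icc 0 (t₁ - δ) ⊆ Set.Ioo t₀ t₁ := fun x hx =>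
      ⟨lt_of_lt_of_le ht₀ hx.1, by linarith [hx.2]⟩
    have hne : (Set.Icc 0 (t₁ - δ)).Nonempty := ⟨0, by constructor <;> [rfl; linarith]⟩
    obtain ⟨x₀, hx₀K, hmin⟩ := isCompact_Icc.exists_isMinOn hne
      (fun x hx => (hcont x (hsub hx)).continuousWithinAt)
    have hm : 0 < u x₀ := (hsol x₀ (hsub hx₀K)).1
    have hev : ∀ᶠ n in atTop, ε n < u x₀ := hεlim.eventually_lt_const hm
    obtain ⟨N, hN⟩ := eventually_atTop.mp hev
    refine ⟨N, fun n hn => ?_⟩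
    obtain ⟨h1, h2, h3⟩ := ht₁n n
    have : t₁ - δ < t₁n n := by
      by_contra hcon
      push_neg at hcon
      have := isMinOn_iff.mp hmin (t₁n n) ⟨le_of_lt h1, hcon⟩
      rw [h3] at this
      exact absurd (hN n hn) (not_lt.mpr this)
    rw [Real.dist_eq, abs_lt]
    constructor <;> [linarith [min_le_left ε' t₁]; linarith]
  refine ⟨hT0, hT1, ?_, ?_⟩
  · -- uniform convergence
    rw [Metric.tendstoUniformlyOn_iff]
    intro ε' hε'
    have h0 : u ⁻¹' Metric.ball 0 ε' ∈ 𝓝[>] t₀ := hcol0 (Metric.ball_mem_nhds 0 hε')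
    have h1 : u ⁻¹' Metric.ball 0 ε' ∈ 𝓝[<] t₁ := hcol1 (Metric.ball_mem_nhds 0 hε')
    obtain ⟨a, ha, hasub⟩ := mem_nhdsGT_iff_exists_Ioo_subset.mp h0
    obtain ⟨b, hb, hbsub⟩ := mem_nhdsLT_iff_exists_Ioo_subset.mp h1
    have ha' : t₀ < min a 0 := lt_min ha ht₀
    have hb' : max b 0 < t₁ := max_lt hb ht₁
    have E1 : ∀ᶠ n in atTop, t₀n n < min a 0 := hT0.eventually_lt_const ha'
    have E2 : ∀ᶠ n in atTop, max b 0 < t₁n n := hT1.eventually_const_lt hb'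
    have E3 : ∀ᶠ n in atTop, ε n < ε' := hεlim.eventually_lt_const hε'
    filter_upwards [E1, E2, E3] with n h1n h2n h3n
    intro t ht
    rw [hw]
    split_ifs with hmem
    · have : u t - (u t - ε n) = ε n := by ring
      rw [Real.dist_eq, this, abs_of_pos (hεpos n)]
      exact h3n
    · rw [Set.mem_Ioo, not_and_or, not_lt, not_lt] at hmem
      rcases hmem with hle | hge
      · have : t ∈ Set.Ioo t₀ a :=
          ⟨ht.1, lt_of_le_of_lt hle (lt_of_lt_of_le h1n (min_le_left _ _))⟩
        have := hasub this
        rw [Set.mem_preimage, Metric.mem_ball] at this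
        exact this
      · have : t ∈ Set.Ioo b t₁ :=
          ⟨lt_of_le_of_lt (le_max_left b 0) (lt_of_lt_of_le h2n hge), ht.2⟩
        have := hbsub this
        rw [Set.mem_preimage, Metric.mem_ball] at this
        exact this
  · -- derivatives
    intro K hK hKsub
    rcases K.eq_empty_or_nonempty with rfl | hne
    · exact tendstoUniformlyOn_empty
    have haK : sInf K ∈ K := hK.sInf_mem hne
    have hbK : sSup K ∈ K := hK.sSup_mem hne
    have ha := hKsub haK
    have hb := hKsub hbK
    have E1 : ∀ᶠ n in atTop, t₀n n < sInf K := hT0.eventually_lt_const ha.1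
    have E2 : ∀ᶠ n in atTop, sSup K < t₁n n := hT1.eventually_const_lt hb.2
    rw [Metric.tendstoUniformlyOn_iff]
    intro ε' hε'
    filter_upwards [E1, E2] with n h1 h2
    intro t ht
    have hta : sInf K ≤ t := csInf_le hK.bddBelow ht
    have htb : t ≤ sSup K := le_csSup hK.bddAbove ht
    have htI : t ∈ Set.Ioo t₀ t₁ := hKsub ht
    have hmem : Set.Ioo (t₀n n) (t₁n n) ∈ 𝓝 t :=
      Ioo_mem_nhds (by linarith) (by linarith)
    have hEq : w n =ᶠ[𝓝 t] fun s => u s - ε n := by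
      filter_upwards [hmem] with s hs
      rw [hw, if_pos hs]
    have heq : deriv (w n) t = u' t := by
      rw [hEq.deriv_eq]
      exact (((hsol t htI).2.1).sub_const (ε n)).deriv
    rw [heq, dist_self]
    exact hε'
end
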